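/- arXiv:2512.10933 — 3 statements merged into one kernel-verified Lean document; each statement's English description precedes it below -/
import Mathlib

section
/- There exists a constant C < ∞ such that for every real b > 0 and every integer k ≥ 1 with b·2^k ≤ 1/2 one has ∑_{i=1}^{k} 2^i·K₀(b·2^i) ≤ C·2^k·K₀(b·2^k). -/
open MeasureTheory

/-- The modified Bessel function of order zero,
`K₀(s) = ∫₀^∞ (1/(2t)) exp(−s²/(4t) − t) dt`. -/
noncomputable def K0 (s : ℝ) : ℝ :=
  ∫ t in Set.Ioi (0 : ℝ), (1 / (2 * t)) * Real.exp (-s ^ 2 / (4 * t) - t)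


private lemma exp_neg_le (x : ℝ) (hx : 0 < x) : Real.exp (-x) ≤ 1 / (Real.exp 1 * x) := by
  have h1 : Real.exp 1 * x ≤ Real.exp x := by
    have := Real.add_one_le_exp (x - 1)
    calc Real.exp 1 * x ≤ Real.exp 1 * Real.exp (x - 1) := by
          have := Real.exp_pos 1; nlinarith
      _ = Real.exp x := by rw [← Real.exp_add]; ring_nf
  rw [Real.exp_neg, ← one_div]
  apply one_div_le_one_div_of_le
  · positivity
  · exact h1

private lemma pointwise_bound {s t : ℝ} (hs : 0 < s) (ht : 0 < t) :
    (1 / (2 * t)) * Real.exp (-s ^ 2 / (4 * t) - t)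
      ≤ (2 / (Real.exp 1 * s ^ 2)) * Real.exp (-t) := by
  have h1 : Real.exp (-s ^ 2 / (4 * t) - t) = Real.exp (-(s ^ 2 / (4 * t))) * Real.exp (-t) := by
    rw [← Real.exp_add]; ring_nf
  rw [h1, ← mul_assoc]
  apply mul_le_mul_of_nonneg_right _ (Real.exp_pos _).le
  have h2 : Real.exp (-(s ^ 2 / (4 * t))) ≤ 1 / (Real.exp 1 * (s ^ 2 / (4 * t))) :=
    exp_neg_le _ (by positivity)
  calc (1 / (2 * t)) * Real.exp (-(s ^ 2 / (4 * t)))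
      ≤ (1 / (2 * t)) * (1 / (Real.exp 1 * (s ^ 2 / (4 * t)))) := by
        apply mul_le_mul_of_nonneg_left h2 (by positivity)
    _ = 2 / (Real.exp 1 * s ^ 2) := by
        have he := Real.exp_pos 1
        field_simp
        ring

private lemma K0_contOn (s : ℝ) :
    ContinuousOn (fun t : ℝ => (1 / (2 * t)) * Real.exp (-s ^ 2 / (4 * t) - t))
      (Set.Ioi 0) := by
  apply ContinuousOn.mul
  · exact continuousOn_const.div (continuous_const.mul continuous_id).continuousOn
      (fun t ht => by have : (0:ℝ) < t := ht; positivity)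
  · apply Real.continuous_exp.comp_continuousOn
    apply ContinuousOn.sub _ continuous_id.continuousOn
    exact continuousOn_const.div (continuous_const.mul continuous_id).continuousOn
      (fun t ht => by have : (0:ℝ) < t := ht; positivity)

private lemma K0_integrableOn {s : ℝ} (hs : 0 < s) :
    IntegrableOn (fun t : ℝ => (1 / (2 * t)) * Real.exp (-s ^ 2 / (4 * t) - t))
      (Set.Ioi 0) := by
  have hg : IntegrableOn (fun t : ℝ => (2 / (Real.exp 1 * s ^ 2)) * Real.exp (-t))
      (Set.Ioi 0) := by
    have := (exp_neg_integrableOn_Ioi (0:ℝ) (one_pos)).const_mul (2 / (Real.exp 1 * s ^ 2))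
    simpa [IntegrableOn] using this
  apply Integrable.mono' hg
  · exact ((K0_contOn s).aestronglyMeasurable measurableSet_Ioi)
  · rw [ae_restrict_iff' measurableSet_Ioi]
    filter_upwards with t ht
    have ht' : (0:ℝ) < t := ht
    rw [Real.norm_eq_abs, abs_of_nonneg (by positivity)]
    exact pointwise_bound hs ht'

private lemma inv_integrableOn {a : ℝ} (ha : 0 < a) :
    IntegrableOn (fun t : ℝ => 1 / (2 * t)) (Set.Ioc a 1) := by
  apply (ContinuousOn.integrableOn_Icc ?_).mono_set Set.Ioc_subset_Icc_self
  exact continuousOn_const.div (continuous_const.mul continuous_id).continuousOn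
    (fun t ht => by have : (0:ℝ) < t := lt_of_lt_of_le ha ht.1; positivity)

private lemma inv_integral_eq {a : ℝ} (ha : 0 < a) (ha1 : a ≤ 1) :
    ∫ t in Set.Ioc a 1, 1 / (2 * t) = Real.log (1 / a) / 2 := by
  rw [← intervalIntegral.integral_of_le ha1]
  have : ∀ t : ℝ, 1 / (2 * t) = (1/2) * t⁻¹ := fun t => by ring
  simp_rw [this]
  rw [intervalIntegral.integral_const_mul, integral_inv_of_pos ha one_pos,
    Real.log_div one_ne_zero ha.ne', Real.log_one]
  ring

private lemma K0_lower {s : ℝ} (hs : 0 < s) (hs1 : s ≤ 1) :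
    Real.exp (-(5/4)) * Real.log (1 / s) ≤ K0 s := by
  set f : ℝ → ℝ := fun t => (1 / (2 * t)) * Real.exp (-s ^ 2 / (4 * t) - t) with hf
  have hs2 : (0:ℝ) < s ^ 2 := by positivity
  have hs21 : s ^ 2 ≤ 1 := by nlinarith
  have hIoc : Set.Ioc (s ^ 2) 1 ⊆ Set.Ioi (0:ℝ) := fun t ht => lt_trans hs2 ht.1
  have step1 : ∫ t in Set.Ioc (s ^ 2) 1, f t ≤ K0 s := by
    apply setIntegral_mono_set (K0_integrableOn hs)
    · rw [Filter.EventuallyLE, ae_restrict_iff' measurableSet_Ioi]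
      filter_upwards with t ht
      have ht' : (0:ℝ) < t := ht
      positivity
    · exact Filter.Eventually.of_forall hIoc
  refine le_trans ?_ step1
  have step2 : ∫ t in Set.Ioc (s ^ 2) 1, Real.exp (-(5/4)) * (1 / (2 * t)) ≤
      ∫ t in Set.Ioc (s ^ 2) 1, f t := by
    apply setIntegral_mono_on ((inv_integrableOn hs2).const_mul _)
      ((K0_integrableOn hs).mono_set hIoc) measurableSet_Ioc
    intro t ht
    have ht0 : (0:ℝ) < t := lt_trans hs2 ht.1
    have h1 : s ^ 2 / (4 * t) ≤ 1/4 := by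
      rw [div_le_iff₀ (by positivity)]
      nlinarith [ht.1.le]
    have h2 : Real.exp (-(5/4)) ≤ Real.exp (-s ^ 2 / (4 * t) - t) := by
      apply Real.exp_le_exp.2
      have := ht.2
      have : -s ^ 2 / (4 * t) = -(s ^ 2 / (4 * t)) := by ring
      rw [this]
      linarith [ht.2]
    calc Real.exp (-(5/4)) * (1 / (2 * t)) = (1 / (2 * t)) * Real.exp (-(5/4)) := by ring
      _ ≤ f t := mul_le_mul_of_nonneg_left h2 (by positivity)
  refine le_trans ?_ step2
  rw [integral_const_mul, inv_integral_eq hs2 hs21]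
  have : Real.log (1 / s ^ 2) = 2 * Real.log (1 / s) := by
    rw [show (1:ℝ) / s ^ 2 = (1/s)^2 by rw [div_pow]; norm_num, Real.log_pow]
    push_cast; ring
  rw [this]
  ring_nf
  exact le_refl _

private lemma K0_upper {s : ℝ} (hs : 0 < s) (hs1 : s ≤ 1) :
    K0 s ≤ Real.log (1 / s) + 1 := by
  set f : ℝ → ℝ := fun t => (1 / (2 * t)) * Real.exp (-s ^ 2 / (4 * t) - t) with hf
  have hs2 : (0:ℝ) < s ^ 2 := by positivity
  have hs21 : s ^ 2 ≤ 1 := by nlinarith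
  have hI := K0_integrableOn hs
  have hI1 : IntegrableOn f (Set.Ioc 0 (s^2)) := hI.mono_set (fun t ht => ht.1)
  have hI2 : IntegrableOn f (Set.Ioc (s^2) 1) := hI.mono_set (fun t ht => lt_trans hs2 ht.1)
  have hI3 : IntegrableOn f (Set.Ioi 1) := hI.mono_set (fun t ht => Set.mem_Ioi.2 (lt_trans one_pos (Set.mem_Ioi.1 ht)))
  have hI12 : IntegrableOn f (Set.Ioc 0 1) := hI.mono_set (fun t ht => ht.1)
  have hsplit : K0 s = (∫ t in Set.Ioc 0 (s^2), f t) + (∫ t in Set.Ioc (s^2) 1, f t)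
      + (∫ t in Set.Ioi 1, f t) := by
    have e1 : K0 s = (∫ t in Set.Ioc 0 1, f t) + (∫ t in Set.Ioi 1, f t) := by
      rw [show K0 s = ∫ t in Set.Ioi (0:ℝ), f t from rfl,
        ← Set.Ioc_union_Ioi_eq_Ioi (zero_le_one (α := ℝ)),
        setIntegral_union (Set.Ioc_disjoint_Ioi le_rfl) measurableSet_Ioi hI12 hI3]
    have e2 : (∫ t in Set.Ioc 0 1, f t) = (∫ t in Set.Ioc 0 (s^2), f t)
        + (∫ t in Set.Ioc (s^2) 1, f t) := by
      rw [← Set.Ioc_union_Ioc_eq_Ioc hs2.le hs21,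
        setIntegral_union (Set.Ioc_disjoint_Ioc.2 (inf_le_left.trans le_sup_right)) measurableSet_Ioc hI1 hI2]
    rw [e1, e2]
  rw [hsplit]
  have b1 : (∫ t in Set.Ioc 0 (s^2), f t) ≤ 2 / Real.exp 1 := by
    have : (∫ t in Set.Ioc 0 (s^2), f t) ≤ ∫ _ in Set.Ioc 0 (s^2), 2 / (Real.exp 1 * s ^ 2) := by
      apply setIntegral_mono_on hI1 (integrableOn_const measure_Ioc_lt_top.ne)
        measurableSet_Ioc
      intro t ht
      calc f t ≤ (2 / (Real.exp 1 * s ^ 2)) * Real.exp (-t) := pointwise_bound hs ht.1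
        _ ≤ (2 / (Real.exp 1 * s ^ 2)) * 1 := by
            apply mul_le_mul_of_nonneg_left _ (by positivity)
            rw [← Real.exp_zero]
            exact Real.exp_le_exp.2 (by linarith [ht.1])
        _ = 2 / (Real.exp 1 * s ^ 2) := mul_one _
    refine le_trans this ?_
    rw [setIntegral_const, measureReal_def, Real.volume_Ioc, smul_eq_mul]
    rw [ENNReal.toReal_ofReal (by nlinarith : (0:ℝ) ≤ s ^ 2 - 0)]
    have he := Real.exp_pos 1
    rw [show s ^ 2 - 0 = s ^ 2 by ring,
      show s ^ 2 * (2 / (Real.exp 1 * s ^ 2)) = 2 / Real.exp 1 by field_simp]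
  have b2 : (∫ t in Set.Ioc (s^2) 1, f t) ≤ Real.log (1 / s) := by
    have : (∫ t in Set.Ioc (s^2) 1, f t) ≤ ∫ t in Set.Ioc (s^2) 1, 1 / (2 * t) := by
      apply setIntegral_mono_on hI2 (inv_integrableOn hs2) measurableSet_Ioc
      intro t ht
      have ht0 : (0:ℝ) < t := lt_trans hs2 ht.1
      calc f t ≤ (1 / (2 * t)) * 1 := by
            apply mul_le_mul_of_nonneg_left _ (by positivity)
            rw [← Real.exp_zero]
            apply Real.exp_le_exp.2
            have : (0:ℝ) < s ^ 2 / (4 * t) := by positivity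
            rw [neg_div]
            linarith
        _ = 1 / (2 * t) := mul_one _
    refine le_trans this ?_
    rw [inv_integral_eq hs2 hs21]
    have : Real.log (1 / s ^ 2) = 2 * Real.log (1 / s) := by
      rw [show (1:ℝ) / s ^ 2 = (1/s)^2 by rw [div_pow]; norm_num, Real.log_pow]
      push_cast; ring
    rw [this]; ring_nf; exact le_refl _
  have b3 : (∫ t in Set.Ioi 1, f t) ≤ 1 / (2 * Real.exp 1) := by
    have hg : IntegrableOn (fun t : ℝ => (1/2) * Real.exp (-t)) (Set.Ioi 1) := by
      have := (exp_neg_integrableOn_Ioi (1:ℝ) (one_pos)).const_mul (1/2 : ℝ)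
      simpa [IntegrableOn] using this
    have : (∫ t in Set.Ioi 1, f t) ≤ ∫ t in Set.Ioi 1, (1/2) * Real.exp (-t) := by
      apply setIntegral_mono_on hI3 hg measurableSet_Ioi
      intro t ht
      have ht0 : (0:ℝ) < t := lt_trans one_pos ht
      have h1 : 1 / (2 * t) ≤ 1/2 := by
        rw [div_le_div_iff₀ (by positivity) (by norm_num)]
        nlinarith [le_of_lt (Set.mem_Ioi.1 ht)]
      have h2 : Real.exp (-s ^ 2 / (4 * t) - t) ≤ Real.exp (-t) := by
        apply Real.exp_le_exp.2
        have : (0:ℝ) < s ^ 2 / (4 * t) := by positivity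
        rw [neg_div]
        linarith
      calc f t ≤ (1/2) * Real.exp (-s ^ 2 / (4 * t) - t) :=
            mul_le_mul_of_nonneg_right h1 (Real.exp_pos _).le
        _ ≤ (1/2) * Real.exp (-t) := mul_le_mul_of_nonneg_left h2 (by norm_num)
    refine le_trans this ?_
    rw [integral_const_mul, integral_exp_neg_Ioi]
    rw [Real.exp_neg]
    have := Real.exp_pos 1
    rw [div_mul_eq_mul_div, one_mul, one_div, mul_inv]
    ring_nf
    exact le_refl _
  have hfinal : 2 / Real.exp 1 + 1 / (2 * Real.exp 1) ≤ 1 := by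
    have he := Real.exp_one_gt_d9
    have hep := Real.exp_pos 1
    rw [div_add_div _ _ (by positivity) (by positivity), div_le_one (by positivity)]
    nlinarith
  linarith

private lemma geom_sum_le (k : ℕ) : ∑ i ∈ Finset.Icc 1 k, (2:ℝ) ^ i ≤ 2 * 2 ^ k := by
  induction k with
  | zero => simp
  | succ k ih =>
    rw [Finset.sum_Icc_succ_top (by omega : 1 ≤ k + 1)]
    have : (0:ℝ) < 2 ^ k := by positivity
    rw [pow_succ]
    linarith

private lemma weighted_sum_le (k : ℕ) :
    ∑ i ∈ Finset.Icc 1 k, (2:ℝ) ^ i * ((k:ℝ) - (i:ℝ) + 3) ≤ 12 * 2 ^ k := by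
  induction k with
  | zero => simp
  | succ k ih =>
    rw [Finset.sum_Icc_succ_top (by omega : 1 ≤ k + 1)]
    have hsplit : ∀ i ∈ Finset.Icc 1 k,
        (2:ℝ) ^ i * (((k:ℕ)+1:ℕ) - (i:ℝ) + 3) = (2:ℝ) ^ i * ((k:ℝ) - i + 3) + 2 ^ i := by
      intro i _
      push_cast
      ring
    rw [Finset.sum_congr rfl hsplit, Finset.sum_add_distrib]
    have hg := geom_sum_le k
    have hp : (0:ℝ) < 2 ^ k := by positivity
    have hlast : (2:ℝ) ^ (k+1) * (((k:ℕ)+1:ℕ) - ((k+1 : ℕ):ℝ) + 3) = 3 * (2 * 2 ^ k) := by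
      push_cast
      rw [pow_succ]
      ring
    rw [hlast, pow_succ]
    push_cast
    linarith

theorem dyadic_bessel_sum_bound :
    ∃ C : ℝ, ∀ b : ℝ, 0 < b → ∀ k : ℕ, 1 ≤ k → b * 2 ^ k ≤ 1 / 2 →
      ∑ i ∈ Finset.Icc 1 k, (2 : ℝ) ^ i * K0 (b * 2 ^ i) ≤ C * 2 ^ k * K0 (b * 2 ^ k) := by
  refine ⟨12 * Real.exp (5/4), ?_⟩
  intro b hb k hk hbk
  set L : ℝ := Real.log (1 / (b * 2 ^ k)) with hL
  have hbk0 : (0:ℝ) < b * 2 ^ k := by positivity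
  have hlog2L : Real.log 2 ≤ L := by
    apply Real.log_le_log (by norm_num)
    rw [le_div_iff₀ hbk0]
    linarith
  have hlog2 : (0:ℝ) < Real.log 2 := Real.log_pos (by norm_num)
  have h1le2L : 1 ≤ 2 * L := by
    have h4 : Real.exp 1 ≤ 4 := by
      have := Real.exp_one_lt_d9
      linarith
    have : (1:ℝ) ≤ Real.log 4 := (Real.le_log_iff_exp_le (by norm_num)).2 h4
    have h42 : Real.log 4 = 2 * Real.log 2 := by
      rw [show (4:ℝ) = 2 ^ 2 by norm_num, Real.log_pow]
      push_cast; ring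
    linarith
  have hL0 : 0 ≤ L := by linarith
  have hterm : ∀ i ∈ Finset.Icc 1 k,
      (2:ℝ) ^ i * K0 (b * 2 ^ i) ≤ (2:ℝ) ^ i * (((k:ℝ) - i + 3) * L) := by
    intro i hi
    rw [Finset.mem_Icc] at hi
    have hik : i ≤ k := hi.2
    have hpi : (0:ℝ) < b * 2 ^ i := by positivity
    have hmono : (2:ℝ) ^ i ≤ 2 ^ k := by
      apply pow_le_pow_right₀ (by norm_num) hik
    have hle1 : b * 2 ^ i ≤ 1 := by
      have : b * 2 ^ i ≤ b * 2 ^ k := by nlinarith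
      linarith
    have hup := K0_upper hpi hle1
    have hlogeq : Real.log (1 / (b * 2 ^ i)) = L + ((k:ℝ) - i) * Real.log 2 := by
      have e1 : Real.log (b * 2 ^ i) = Real.log b + i * Real.log 2 := by
        rw [Real.log_mul hb.ne' (by positivity), Real.log_pow]
      have e2 : Real.log (b * 2 ^ k) = Real.log b + k * Real.log 2 := by
        rw [Real.log_mul hb.ne' (by positivity), Real.log_pow]
      rw [Real.log_div one_ne_zero hpi.ne', Real.log_one, e1, hL,
        Real.log_div one_ne_zero hbk0.ne', Real.log_one, e2]
      ring
    have hki : (0:ℝ) ≤ (k:ℝ) - i := by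
      have : (i:ℝ) ≤ k := by exact_mod_cast hik
      linarith
    have hK0le : K0 (b * 2 ^ i) ≤ ((k:ℝ) - i + 3) * L := by
      have h1 : ((k:ℝ) - i) * Real.log 2 ≤ ((k:ℝ) - i) * L :=
        mul_le_mul_of_nonneg_left hlog2L hki
      calc K0 (b * 2 ^ i) ≤ Real.log (1 / (b * 2 ^ i)) + 1 := hup
        _ = L + ((k:ℝ) - i) * Real.log 2 + 1 := by rw [hlogeq]
        _ ≤ L + ((k:ℝ) - i) * L + 2 * L := by linarith
        _ = ((k:ℝ) - i + 3) * L := by ring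
    exact mul_le_mul_of_nonneg_left hK0le (by positivity)
  calc ∑ i ∈ Finset.Icc 1 k, (2 : ℝ) ^ i * K0 (b * 2 ^ i)
      ≤ ∑ i ∈ Finset.Icc 1 k, (2:ℝ) ^ i * (((k:ℝ) - i + 3) * L) := Finset.sum_le_sum hterm
    _ = (∑ i ∈ Finset.Icc 1 k, (2:ℝ) ^ i * ((k:ℝ) - i + 3)) * L := by
        rw [Finset.sum_mul]
        apply Finset.sum_congr rfl
        intro i _
        ring
    _ ≤ (12 * 2 ^ k) * L := mul_le_mul_of_nonneg_right (weighted_sum_le k) hL0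
    _ ≤ (12 * 2 ^ k) * (Real.exp (5/4) * K0 (b * 2 ^ k)) := by
        apply mul_le_mul_of_nonneg_left _ (by positivity)
        have hlow := K0_lower hbk0 (by linarith : b * 2 ^ k ≤ 1)
        have he : (0:ℝ) < Real.exp (5/4) := Real.exp_pos _
        rw [Real.exp_neg] at hlow
        calc L = Real.exp (5/4) * ((Real.exp (5/4))⁻¹ * L) := by
              field_simp
          _ ≤ Real.exp (5/4) * K0 (b * 2 ^ k) :=
              mul_le_mul_of_nonneg_left hlow he.le
    _ = 12 * Real.exp (5/4) * 2 ^ k * K0 (b * 2 ^ k) := by ring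
end

section
/- There exists a constant C < ∞ such that for all integers P ≥ 2 and all integers m with 1 ≤ m ≤ P/2 one has ∑_{k=1}^{m} K₀(k/P) ≤ C·m·K₀(m/P). -/
open MeasureTheory Real Set Filter

/-- exp(-x) ≤ 1/x for x > 0 -/
lemma exp_neg_le_inv {x : ℝ} (hx : 0 < x) : Real.exp (-x) ≤ x⁻¹ := by
  rw [Real.exp_neg]
  exact inv_anti₀ hx (by linarith [Real.add_one_le_exp x])

lemma hasDerivAt_exp_neg_div (c x : ℝ) (hx : 0 < x) :
    HasDerivAt (fun t : ℝ => Real.exp (-c / t)) (c / x ^ 2 * Real.exp (-c / x)) x := by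
  have h1 : HasDerivAt (fun t : ℝ => -c / t) (c / x ^ 2) x := by
    have h := (hasDerivAt_inv hx.ne').const_mul (-c)
    have heq : (fun t : ℝ => -c * t⁻¹) = fun t : ℝ => -c / t := by
      funext t; rw [div_eq_mul_inv]
    rw [heq] at h
    exact h.congr_deriv (by ring)
  have := h1.exp
  convert this using 1
  ring

/-- the auxiliary function used for the improper integral -/
noncomputable def gAux (c : ℝ) (t : ℝ) : ℝ := if t = 0 then 0 else Real.exp (-c / t)

lemma gAux_cont (c : ℝ) (hc : 0 < c) : ContinuousWithinAt (gAux c) (Ici 0) 0 := by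
  rw [ContinuousWithinAt]
  have h0 : gAux c 0 = 0 := by simp [gAux]
  rw [h0]
  apply squeeze_zero' (f := gAux c) (g := fun t => t / c)
  · filter_upwards [self_mem_nhdsWithin] with t (ht : t ∈ Ici 0)
    rcases eq_or_lt_of_le (show (0:ℝ) ≤ t from ht) with h | h
    · simp [gAux, ← h]
    · have : gAux c t = Real.exp (-c / t) := by simp [gAux, h.ne']
      rw [this]
      positivity
  · filter_upwards [self_mem_nhdsWithin] with t (ht : t ∈ Ici 0)
    rcases eq_or_lt_of_le (show (0:ℝ) ≤ t from ht) with h | h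
    · simp [gAux, ← h]
    · have : gAux c t = Real.exp (-c / t) := by simp [gAux, h.ne']
      rw [this]
      have h2 : 0 < c / t := by positivity
      have := exp_neg_le_inv h2
      rw [neg_div]
      calc Real.exp (-(c/t)) ≤ (c/t)⁻¹ := this
        _ = t / c := by rw [inv_div]
  · have : Tendsto (fun t : ℝ => t / c) (nhds 0) (nhds (0 / c)) :=
      (continuous_id.div_const c).tendsto 0
    rw [zero_div] at this
    exact this.mono_left nhdsWithin_le_nhds

lemma gAux_tendsto (c : ℝ) : Tendsto (gAux c) atTop (nhds 1) := by
  have h1 : Tendsto (fun t : ℝ => -c / t) atTop (nhds 0) := by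
    simpa [div_eq_mul_inv] using tendsto_inv_atTop_zero.const_mul (-c)
  have h2 : Tendsto (fun t : ℝ => Real.exp (-c / t)) atTop (nhds 1) := by
    simpa [Function.comp_def] using (Real.continuous_exp.tendsto 0).comp h1
  apply h2.congr'
  filter_upwards [eventually_gt_atTop (0:ℝ)] with t ht
  simp [gAux, ht.ne']

lemma gAux_deriv (c : ℝ) {x : ℝ} (hx : x ∈ Ioi (0:ℝ)) :
    HasDerivAt (gAux c) (c / x ^ 2 * Real.exp (-c / x)) x := by
  have hx' : (0:ℝ) < x := hx
  apply (hasDerivAt_exp_neg_div c x hx').congr_of_eventuallyEq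
  filter_upwards [eventually_ne_nhds hx'.ne'] with t ht
  simp [gAux, ht]

lemma integral_cExp (c : ℝ) (hc : 0 < c) :
    ∫ t in Ioi (0:ℝ), c / t ^ 2 * Real.exp (-c / t) = 1 := by
  have := integral_Ioi_of_hasDerivAt_of_nonneg (g := gAux c)
      (g' := fun t => c / t ^ 2 * Real.exp (-c / t)) (gAux_cont c hc)
      (fun x hx => gAux_deriv c hx) (fun x hx => by positivity) (gAux_tendsto c)
  simpa [gAux] using this

lemma integrableOn_cExp (c : ℝ) (hc : 0 < c) :
    IntegrableOn (fun t => c / t ^ 2 * Real.exp (-c / t)) (Ioi (0:ℝ)) := by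
  exact integrableOn_Ioi_deriv_of_nonneg (gAux_cont c hc)
      (fun x hx => gAux_deriv c hx) (fun x hx => by positivity) (gAux_tendsto c)

lemma integrand_meas (s : ℝ) :
    AEStronglyMeasurable (fun t => (1 / (2 * t)) * Real.exp (-s ^ 2 / (4 * t) - t)) (volume : Measure ℝ) := by
  apply Measurable.aestronglyMeasurable
  fun_prop

lemma integrableOn_f {s : ℝ} (hs : 0 < s) :
    IntegrableOn (fun t => (1 / (2 * t)) * Real.exp (-s ^ 2 / (4 * t) - t)) (Ioi (0:ℝ)) := by
  have key : ∀ t ∈ Ioi (0:ℝ), Real.exp (-s ^ 2 / (4 * t) - t)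
      ≤ Real.exp (-s ^ 2 / (4 * t)) := by
    intro t ht
    apply Real.exp_le_exp.mpr
    linarith [le_of_lt (show (0:ℝ) < t from ht)]
  rw [show Ioi (0:ℝ) = Ioc 0 1 ∪ Ioi 1 from (Ioc_union_Ioi_eq_Ioi zero_le_one).symm]
  apply IntegrableOn.union
  · apply Measure.integrableOn_of_bounded (M := 2 / s ^ 2)
        (measure_Ioc_lt_top.ne) (integrand_meas s)
    rw [ae_restrict_iff' measurableSet_Ioc]
    filter_upwards with t ht
    have ht0 : 0 < t := ht.1
    have h1 : Real.exp (-s ^ 2 / (4 * t) - t) ≤ 4 * t / s ^ 2 := by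
      have h2 : Real.exp (-s ^ 2 / (4 * t)) ≤ 4 * t / s ^ 2 := by
        have hx : 0 < s ^ 2 / (4 * t) := by positivity
        have := exp_neg_le_inv hx
        rw [neg_div]
        calc Real.exp (-(s ^ 2 / (4 * t))) ≤ (s ^ 2 / (4 * t))⁻¹ := this
          _ = 4 * t / s ^ 2 := by rw [inv_div]
      exact (key t ht0).trans h2
    have hnn : (0:ℝ) ≤ 1 / (2 * t) := by positivity
    rw [norm_mul, norm_of_nonneg hnn, norm_of_nonneg (Real.exp_nonneg _)]
    calc 1 / (2 * t) * Real.exp (-s ^ 2 / (4 * t) - t) ≤ 1 / (2 * t) * (4 * t / s ^ 2) :=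
          mul_le_mul_of_nonneg_left h1 hnn
      _ = 2 / s ^ 2 := by field_simp; ring
  · apply Integrable.mono' ((exp_neg_integrableOn_Ioi (1:ℝ) one_pos).const_mul (1/2))
    · exact (integrand_meas s).restrict
    · rw [ae_restrict_iff' measurableSet_Ioi]
      filter_upwards with t ht
      have ht1 : (1:ℝ) < t := ht
      have ht0 : (0:ℝ) < t := lt_trans one_pos ht1
      have hnn : (0:ℝ) ≤ 1 / (2 * t) := by positivity
      rw [norm_mul, norm_of_nonneg hnn, norm_of_nonneg (Real.exp_nonneg _)]
      have h1 : 1 / (2 * t) ≤ 1 / 2 := by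
        rw [div_le_div_iff₀ (by positivity) (by norm_num)]
        linarith
      have h2 : Real.exp (-s ^ 2 / (4 * t) - t) ≤ Real.exp (-t) := by
        apply Real.exp_le_exp.mpr
        have : -s ^ 2 / (4 * t) ≤ 0 :=
          div_nonpos_of_nonpos_of_nonneg (by nlinarith) (by positivity)
        linarith
      calc 1 / (2 * t) * Real.exp (-s ^ 2 / (4 * t) - t) ≤ 1 / 2 * Real.exp (-t) :=
            mul_le_mul h1 h2 (Real.exp_nonneg _) (by norm_num)
        _ = 1 / 2 * Real.exp (-(1:ℝ) * t) := by ring_nf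

lemma K0_anti {a b : ℝ} (ha : 0 < a) (hab : a ≤ b) : K0 b ≤ K0 a := by
  apply setIntegral_mono_on (integrableOn_f (lt_of_lt_of_le ha hab)) (integrableOn_f ha)
    measurableSet_Ioi
  intro t ht
  have ht0 : (0:ℝ) < t := ht
  have hnn : (0:ℝ) ≤ 1 / (2 * t) := by positivity
  apply mul_le_mul_of_nonneg_left _ hnn
  apply Real.exp_le_exp.mpr
  have : -b ^ 2 / (4 * t) ≤ -a ^ 2 / (4 * t) := by
    apply div_le_div_of_nonneg_right _ (by positivity)
    · nlinarith
  linarith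

lemma K0_pos : 0 < K0 (1/2 : ℝ) := by
  rw [K0]
  rw [setIntegral_pos_iff_support_of_nonneg_ae]
  · have hsub : Ioi (0:ℝ) ⊆ Function.support
        (fun t => (1 / (2 * t)) * Real.exp (-(1/2:ℝ) ^ 2 / (4 * t) - t)) ∩ Ioi 0 := by
      intro t ht
      have ht0 : (0:ℝ) < t := ht
      refine ⟨?_, ht⟩
      simp only [Function.mem_support]
      positivity
    calc (0:ENNReal) < volume (Ioi (0:ℝ)) := by simp [Real.volume_Ioi]
      _ ≤ _ := measure_mono hsub
  · rw [EventuallyLE, ae_restrict_iff' measurableSet_Ioi]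
    filter_upwards with t ht
    have ht0 : (0:ℝ) < t := ht
    positivity
  · exact integrableOn_f (by norm_num)



lemma G_rw (s t : ℝ) (hs : s ≠ 0) :
    s / (4 * t ^ 2) * Real.exp (-s ^ 2 / (4 * t))
      = (1/s) * ((s ^ 2 / 4) / t ^ 2 * Real.exp (-(s ^ 2 / 4) / t)) := by
  have h1 : -s ^ 2 / (4 * t) = -(s ^ 2 / 4) / t := by ring
  have h2 : (1/s) * (s ^ 2 / 4) = s / 4 := by
    field_simp
  rw [h1]
  calc s / (4 * t ^ 2) * Real.exp (-(s ^ 2 / 4) / t)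
      = ((1/s) * (s ^ 2 / 4)) / t ^ 2 * Real.exp (-(s ^ 2 / 4) / t) := by rw [h2]; ring
    _ = (1/s) * ((s ^ 2 / 4) / t ^ 2 * Real.exp (-(s ^ 2 / 4) / t)) := by ring

lemma integral_G {s : ℝ} (hs : 0 < s) :
    ∫ t in Ioi (0:ℝ), s / (4 * t ^ 2) * Real.exp (-s ^ 2 / (4 * t)) = 1 / s := by
  have hc : 0 < s ^ 2 / 4 := by positivity
  calc ∫ t in Ioi (0:ℝ), s / (4 * t ^ 2) * Real.exp (-s ^ 2 / (4 * t))
      = ∫ t in Ioi (0:ℝ), (1/s) * ((s ^ 2 / 4) / t ^ 2 * Real.exp (-(s ^ 2 / 4) / t)) := by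
        apply setIntegral_congr_fun measurableSet_Ioi
        intro t _
        exact G_rw s t hs.ne'
    _ = (1/s) * ∫ t in Ioi (0:ℝ), (s ^ 2 / 4) / t ^ 2 * Real.exp (-(s ^ 2 / 4) / t) :=
        integral_const_mul _ _
    _ = 1 / s := by rw [integral_cExp _ hc, mul_one]

lemma integrableOn_G {s : ℝ} (hs : 0 < s) :
    IntegrableOn (fun t => s / (4 * t ^ 2) * Real.exp (-s ^ 2 / (4 * t))) (Ioi (0:ℝ)) := by
  have hc : 0 < s ^ 2 / 4 := by positivity
  have h : IntegrableOn (fun t => (1/s) * ((s ^ 2 / 4) / t ^ 2 * Real.exp (-(s ^ 2 / 4) / t)))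
      (Ioi (0:ℝ)) := (integrableOn_cExp _ hc).const_mul (1/s)
  exact h.congr_fun (fun t _ => (G_rw s t hs.ne').symm) measurableSet_Ioi

lemma K0_le {a b : ℝ} (ha : 0 < a) (hab : a ≤ b) : K0 a ≤ K0 b + Real.log (b / a) := by
  have hb : 0 < b := lt_of_lt_of_le ha hab
  have hGmeas : AEStronglyMeasurable
      (fun p : ℝ × ℝ => p.2 / (4 * p.1 ^ 2) * Real.exp (-p.2 ^ 2 / (4 * p.1)))
      ((volume.restrict (Ioi (0:ℝ))).prod (volume.restrict (Ioc a b))) := by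
    apply Measurable.aestronglyMeasurable
    fun_prop
  have hGint : Integrable (fun p : ℝ × ℝ => p.2 / (4 * p.1 ^ 2) * Real.exp (-p.2 ^ 2 / (4 * p.1)))
      ((volume.restrict (Ioi (0:ℝ))).prod (volume.restrict (Ioc a b))) := by
    rw [integrable_prod_iff' hGmeas]
    refine ⟨?_, ?_⟩
    · rw [ae_restrict_iff' measurableSet_Ioc]
      filter_upwards with s hs
      exact integrableOn_G (ha.trans_le hs.1.le)
    · have h1s : Integrable (fun s : ℝ => 1 / s) (volume.restrict (Ioc a b)) := by
        apply IntegrableOn.mono_set (t := Icc a b) _ Ioc_subset_Icc_self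
        apply ContinuousOn.integrableOn_compact isCompact_Icc
        apply ContinuousOn.div continuousOn_const continuousOn_id
        intro x hx
        exact (ha.trans_le hx.1).ne'
      apply h1s.congr
      rw [EventuallyEq, ae_restrict_iff' measurableSet_Ioc]
      filter_upwards with s hs
      have hs0 : (0:ℝ) < s := ha.trans_le hs.1.le
      calc (1:ℝ)/s = ∫ t in Ioi (0:ℝ), s / (4 * t ^ 2) * Real.exp (-s ^ 2 / (4 * t)) :=
            (integral_G hs0).symm
        _ = ∫ t in Ioi (0:ℝ), ‖s / (4 * t ^ 2) * Real.exp (-s ^ 2 / (4 * t))‖ := by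
            apply setIntegral_congr_fun measurableSet_Ioi
            intro t ht
            have ht0 : (0:ℝ) < t := ht
            exact (norm_of_nonneg (by positivity)).symm
  -- inner FTC
  have inner : ∀ t ∈ Ioi (0:ℝ),
      (∫ s in Ioc a b, s / (4 * t ^ 2) * Real.exp (-s ^ 2 / (4 * t)))
        = 1 / (2 * t) * (Real.exp (-a ^ 2 / (4 * t)) - Real.exp (-b ^ 2 / (4 * t))) := by
    intro t ht
    have ht0 : (0:ℝ) < t := ht
    have hderiv : ∀ s ∈ Icc a b, HasDerivAt (fun u : ℝ => -Real.exp (-u ^ 2 / (4 * t)))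
        (s / (2 * t) * Real.exp (-s ^ 2 / (4 * t))) s := by
      intro s _
      have h0 : HasDerivAt (fun u : ℝ => -(u ^ 2 / (4 * t))) _ s :=
        ((hasDerivAt_pow 2 s).div_const (4 * t)).neg
      have e1 : (fun u : ℝ => -(u ^ 2 / (4 * t))) = fun u : ℝ => -u ^ 2 / (4 * t) := by
        funext u; rw [neg_div]
      rw [e1] at h0
      have h2 := (h0.exp).neg
      exact h2.congr_deriv (by norm_num; ring)
    have hcont : ContinuousOn (fun u : ℝ => -Real.exp (-u ^ 2 / (4 * t))) (Icc a b) := by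
      apply ContinuousOn.neg
      exact Real.continuous_exp.comp_continuousOn (((continuousOn_id.pow 2).neg).div_const _)
    have hint : IntervalIntegrable (fun s : ℝ => s / (2 * t) * Real.exp (-s ^ 2 / (4 * t)))
        volume a b := by
      apply ContinuousOn.intervalIntegrable
      apply ContinuousOn.mul (continuousOn_id.div_const _)
      exact Real.continuous_exp.comp_continuousOn (((continuousOn_id.pow 2).neg).div_const _)
    have ftc := intervalIntegral.integral_eq_sub_of_hasDerivAt_of_le hab hcont
      (fun s hs => hderiv s (Ioo_subset_Icc_self hs)) hint
    rw [intervalIntegral.integral_of_le hab] at ftc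
    have hre : (∫ s in Ioc a b, s / (4 * t ^ 2) * Real.exp (-s ^ 2 / (4 * t)))
        = ∫ s in Ioc a b, 1 / (2 * t) * (s / (2 * t) * Real.exp (-s ^ 2 / (4 * t))) := by
      apply setIntegral_congr_fun measurableSet_Ioc
      intro s _
      have htne : t ≠ 0 := ht0.ne'
      show s / (4 * t ^ 2) * Real.exp (-s ^ 2 / (4 * t))
          = 1 / (2 * t) * (s / (2 * t) * Real.exp (-s ^ 2 / (4 * t)))
      rw [← mul_assoc, div_mul_div_comm, one_mul]
      congr 1
      ring
    rw [hre, integral_const_mul, ftc]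
    ring
  -- swap
  have swap := integral_integral_swap
    (f := fun t s : ℝ => s / (4 * t ^ 2) * Real.exp (-s ^ 2 / (4 * t)))
    (μ := volume.restrict (Ioi (0:ℝ))) (ν := volume.restrict (Ioc a b)) hGint
  have outer : (∫ t in Ioi (0:ℝ), ∫ s in Ioc a b, s / (4 * t ^ 2) * Real.exp (-s ^ 2 / (4 * t)))
      = Real.log (b / a) := by
    rw [swap]
    have h2 : (∫ s in Ioc a b, ∫ t in Ioi (0:ℝ), s / (4 * t ^ 2) * Real.exp (-s ^ 2 / (4 * t)))
        = ∫ s in Ioc a b, 1 / s := by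
      apply setIntegral_congr_fun measurableSet_Ioc
      intro s hs
      exact integral_G (ha.trans_le hs.1.le)
    rw [h2, ← intervalIntegral.integral_of_le hab]
    apply integral_one_div
    rw [uIcc_of_le hab]
    intro h
    exact absurd h.1 (not_le.mpr ha)
  -- comparison
  have hfa := integrableOn_f ha
  have hfb := integrableOn_f hb
  have hHint : IntegrableOn
      (fun t => ∫ s in Ioc a b, s / (4 * t ^ 2) * Real.exp (-s ^ 2 / (4 * t)))
      (Ioi (0:ℝ)) := hGint.integral_prod_left
  have hdiff : K0 a - K0 b
      = ∫ t in Ioi (0:ℝ), ((1 / (2 * t)) * Real.exp (-a ^ 2 / (4 * t) - t)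
          - (1 / (2 * t)) * Real.exp (-b ^ 2 / (4 * t) - t)) := by
    rw [K0, K0, ← integral_sub hfa hfb]
  have hmono : K0 a - K0 b
      ≤ ∫ t in Ioi (0:ℝ), ∫ s in Ioc a b, s / (4 * t ^ 2) * Real.exp (-s ^ 2 / (4 * t)) := by
    rw [hdiff]
    apply setIntegral_mono_on (hfa.sub hfb) hHint measurableSet_Ioi
    intro t ht
    have ht0 : (0:ℝ) < t := ht
    simp only [Pi.sub_apply]
    rw [inner t ht]
    have e1 : Real.exp (-a ^ 2 / (4 * t) - t)
        = Real.exp (-a ^ 2 / (4 * t)) * Real.exp (-t) := by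
      rw [← Real.exp_add]; ring_nf
    have e2 : Real.exp (-b ^ 2 / (4 * t) - t)
        = Real.exp (-b ^ 2 / (4 * t)) * Real.exp (-t) := by
      rw [← Real.exp_add]; ring_nf
    rw [e1, e2]
    have hd : 0 ≤ Real.exp (-a ^ 2 / (4 * t)) - Real.exp (-b ^ 2 / (4 * t)) := by
      have h3 : -b ^ 2 / (4 * t) ≤ -a ^ 2 / (4 * t) := by
        apply div_le_div_of_nonneg_right _ (by positivity)
        nlinarith
      have := Real.exp_le_exp.mpr h3
      linarith
    have hexp1 : Real.exp (-t) ≤ 1 := Real.exp_le_one_iff.mpr (by linarith)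
    calc 1 / (2 * t) * (Real.exp (-a ^ 2 / (4 * t)) * Real.exp (-t))
          - 1 / (2 * t) * (Real.exp (-b ^ 2 / (4 * t)) * Real.exp (-t))
        = 1 / (2 * t) * ((Real.exp (-a ^ 2 / (4 * t)) - Real.exp (-b ^ 2 / (4 * t)))
            * Real.exp (-t)) := by ring
      _ ≤ 1 / (2 * t) * ((Real.exp (-a ^ 2 / (4 * t)) - Real.exp (-b ^ 2 / (4 * t))) * 1) := by
          apply mul_le_mul_of_nonneg_left _ (by positivity)
          exact mul_le_mul_of_nonneg_left hexp1 hd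
      _ = 1 / (2 * t) * (Real.exp (-a ^ 2 / (4 * t)) - Real.exp (-b ^ 2 / (4 * t))) := by ring
  rw [outer] at hmono
  linarith



lemma pow_le_exp_mul_factorial : ∀ m : ℕ, (m : ℝ) ^ m ≤ Real.exp m * (Nat.factorial m : ℝ)
  | 0 => by simp
  | (m+1) => by
    rcases Nat.eq_zero_or_pos m with rfl | hm
    · simpa using Real.one_le_exp (by norm_num)
    · have hm' : (0:ℝ) < m := by exact_mod_cast hm
      have key : ((m:ℝ) + 1) ^ m ≤ Real.exp 1 * (m:ℝ) ^ m := by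
        have h1 : (m:ℝ) + 1 = (1 + 1/m) * m := by field_simp
        have h2 : (1 + 1/(m:ℝ)) ≤ Real.exp (1/m) := by
          have := Real.add_one_le_exp (1/(m:ℝ))
          linarith
        calc ((m:ℝ) + 1) ^ m = (1 + 1/(m:ℝ)) ^ m * (m:ℝ) ^ m := by
              rw [h1, mul_pow]
          _ ≤ Real.exp (1/(m:ℝ)) ^ m * (m:ℝ) ^ m := by
              apply mul_le_mul_of_nonneg_right _ (by positivity)
              exact pow_le_pow_left₀ (by positivity) h2 m
          _ = Real.exp 1 * (m:ℝ) ^ m := by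
              rw [← Real.exp_nat_mul]
              congr 1
              field_simp
      have ih := pow_le_exp_mul_factorial m
      have h3 : ((m:ℕ)+1 : ℝ) ^ (m+1) = ((m:ℝ)+1) * ((m:ℝ)+1) ^ m := by
        rw [pow_succ]; ring
      push_cast
      calc ((m:ℝ)+1) ^ (m+1) = ((m:ℝ)+1) * ((m:ℝ)+1) ^ m := by rw [pow_succ]; ring
        _ ≤ ((m:ℝ)+1) * (Real.exp 1 * (m:ℝ) ^ m) := by
            apply mul_le_mul_of_nonneg_left key (by positivity)
        _ ≤ ((m:ℝ)+1) * (Real.exp 1 * (Real.exp m * (Nat.factorial m : ℝ))) := by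
            apply mul_le_mul_of_nonneg_left _ (by positivity)
            exact mul_le_mul_of_nonneg_left ih (Real.exp_nonneg 1)
        _ = Real.exp ((m:ℝ)+1) * (((m:ℝ)+1) * (Nat.factorial m : ℝ)) := by
            rw [Real.exp_add]; ring
        _ = Real.exp ((m:ℝ)+1) * ((Nat.factorial (m+1) : ℝ)) := by
            rw [Nat.factorial_succ]; push_cast; ring

lemma sum_log_le (m : ℕ) (hm : 1 ≤ m) :
    ∑ k ∈ Finset.Icc 1 m, Real.log ((m:ℝ)/k) ≤ m := by
  have hprod : ∏ k ∈ Finset.Icc 1 m, ((m:ℝ)/k) = (m:ℝ)^m / (Nat.factorial m : ℝ) := by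
    rw [Finset.prod_div_distrib, Finset.prod_const]
    congr 1
    · rw [Nat.card_Icc]; simp
    · rw [← Nat.cast_prod]
      congr 1
      rw [← Finset.Ico_add_one_right_eq_Icc]
      exact Finset.prod_Ico_id_eq_factorial m
  have hpos : ∀ k ∈ Finset.Icc 1 m, (0:ℝ) < (m:ℝ)/k := by
    intro k hk
    simp only [Finset.mem_Icc] at hk
    have h1 : (0:ℝ) < k := by exact_mod_cast hk.1
    have h2 : (0:ℝ) < m := by exact_mod_cast hm
    positivity
  have hlog : ∑ k ∈ Finset.Icc 1 m, Real.log ((m:ℝ)/k)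
      = Real.log ((m:ℝ)^m / (Nat.factorial m : ℝ)) := by
    rw [← hprod, Real.log_prod]
    intro k hk
    exact (hpos k hk).ne'
  rw [hlog]
  have hfac : (0:ℝ) < (Nat.factorial m : ℝ) := by exact_mod_cast Nat.factorial_pos m
  have h4 : (m:ℝ)^m / (Nat.factorial m : ℝ) ≤ Real.exp m := by
    rw [div_le_iff₀ hfac]
    exact pow_le_exp_mul_factorial m
  calc Real.log ((m:ℝ)^m / (Nat.factorial m : ℝ)) ≤ Real.log (Real.exp m) :=
        Real.log_le_log (by positivity) h4
    _ = m := Real.log_exp m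

theorem bessel_partial_sum_bound :
    ∃ C : ℝ, ∀ P : ℕ, 2 ≤ P → ∀ m : ℕ, 1 ≤ m → (m : ℝ) ≤ (P : ℝ) / 2 →
      ∑ k ∈ Finset.Icc 1 m, K0 ((k : ℝ) / P) ≤ C * m * K0 ((m : ℝ) / P) := by
  refine ⟨1 + 1 / K0 (1/2 : ℝ), ?_⟩
  intro P hP m hm hmP
  have hc : 0 < K0 (1/2 : ℝ) := K0_pos
  have hP0 : (0:ℝ) < P := by
    have : (2:ℝ) ≤ P := by exact_mod_cast hP
    linarith
  have hm0 : (0:ℝ) < m := by exact_mod_cast hm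
  have hmP0 : 0 < (m:ℝ)/P := by positivity
  have hhalf : (m:ℝ)/P ≤ 1/2 := by
    rw [div_le_iff₀ hP0]
    linarith
  have hKm : K0 (1/2 : ℝ) ≤ K0 ((m:ℝ)/P) := K0_anti hmP0 hhalf
  have hKm0 : 0 < K0 ((m:ℝ)/P) := lt_of_lt_of_le hc hKm
  have step1 : ∑ k ∈ Finset.Icc 1 m, K0 ((k:ℝ)/P)
      ≤ ∑ k ∈ Finset.Icc 1 m, (K0 ((m:ℝ)/P) + Real.log ((m:ℝ)/k)) := by
    apply Finset.sum_le_sum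
    intro k hk
    obtain ⟨hk1, hk2⟩ := Finset.mem_Icc.mp hk
    have hk0 : (0:ℝ) < k := by exact_mod_cast hk1
    have hkm : (k:ℝ)/P ≤ (m:ℝ)/P := by
      have : (k:ℝ) ≤ m := by exact_mod_cast hk2
      gcongr
    have h := K0_le (show 0 < (k:ℝ)/P by positivity) hkm
    have harg : ((m:ℝ)/P) / ((k:ℝ)/P) = (m:ℝ)/k := by
      rw [div_div_div_cancel_right₀]
      exact hP0.ne'
    rw [harg] at h
    exact h
  have step2 : ∑ k ∈ Finset.Icc 1 m, (K0 ((m:ℝ)/P) + Real.log ((m:ℝ)/k))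
      = m * K0 ((m:ℝ)/P) + ∑ k ∈ Finset.Icc 1 m, Real.log ((m:ℝ)/k) := by
    rw [Finset.sum_add_distrib, Finset.sum_const, Nat.card_Icc]
    simp [nsmul_eq_mul]
  have step3 := sum_log_le m hm
  have step4 : (m:ℝ) ≤ (1 / K0 (1/2 : ℝ)) * (m * K0 ((m:ℝ)/P)) := by
    have h5 : 1 ≤ (1 / K0 (1/2 : ℝ)) * K0 ((m:ℝ)/P) := by
      rw [div_mul_eq_mul_div, one_mul, le_div_iff₀ hc]
      linarith
    calc (m:ℝ) = m * 1 := by ring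
      _ ≤ m * ((1 / K0 (1/2:ℝ)) * K0 ((m:ℝ)/P)) := mul_le_mul_of_nonneg_left h5 hm0.le
      _ = (1 / K0 (1/2:ℝ)) * (m * K0 ((m:ℝ)/P)) := by ring
  calc ∑ k ∈ Finset.Icc 1 m, K0 ((k:ℝ)/P)
      ≤ m * K0 ((m:ℝ)/P) + ∑ k ∈ Finset.Icc 1 m, Real.log ((m:ℝ)/k) := by
        rw [← step2]; exact step1
    _ ≤ m * K0 ((m:ℝ)/P) + m := by linarith
    _ ≤ m * K0 ((m:ℝ)/P) + (1 / K0 (1/2 : ℝ)) * (m * K0 ((m:ℝ)/P)) := by linarith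
    _ = (1 + 1 / K0 (1/2 : ℝ)) * m * K0 ((m:ℝ)/P) := by ring
end

section
/- Gradient estimate for massive discrete harmonic functions: there exists a constant C < ∞ such that for all integers N ≥ 1, all reals R ≥ 1, and every function u : ℤ² → ℝ satisfying (1+N^{−2})·u(x) = (1/4)·∑_{e∈ℤ², |e|=1} u(x+e) for every x ∈ ℤ² with |x| ≤ 2R − 1, one has |u(x₁) − u(x₂)| ≤ (C/R)·|x₁ − x₂|·sup_{z∈ℤ², |z| ≤ 2R} |u(z)| for all x₁, x₂ ∈ ℤ² with |x₁| ≤ R/2 and |x₂| ≤ R/2. -/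
/-- Euclidean distance on `ℤ²`. -/
noncomputable def edist2 (x y : ℤ × ℤ) : ℝ :=
  Real.sqrt (((x.1 - y.1 : ℤ) : ℝ) ^ 2 + ((x.2 - y.2 : ℤ) : ℝ) ^ 2)

lemma sqrt_tri (a b c d : ℝ) :
    Real.sqrt ((a+c)^2 + (b+d)^2) ≤ Real.sqrt (a^2+b^2) + Real.sqrt (c^2+d^2) := by
  have s1 := Real.sqrt_nonneg (a^2+b^2)
  have s2 := Real.sqrt_nonneg (c^2+d^2)
  have h1 : Real.sqrt (a^2+b^2) ^ 2 = a^2+b^2 := Real.sq_sqrt (by positivity)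
  have h2 : Real.sqrt (c^2+d^2) ^ 2 = c^2+d^2 := Real.sq_sqrt (by positivity)
  have hCS : a*c + b*d ≤ Real.sqrt (a^2+b^2) * Real.sqrt (c^2+d^2) := by
    calc a*c+b*d ≤ |a*c+b*d| := le_abs_self _
      _ = Real.sqrt ((a*c+b*d)^2) := (Real.sqrt_sq_eq_abs _).symm
      _ ≤ Real.sqrt ((a^2+b^2)*(c^2+d^2)) :=
          Real.sqrt_le_sqrt (by nlinarith [sq_nonneg (a*d-b*c)])
      _ = Real.sqrt (a^2+b^2) * Real.sqrt (c^2+d^2) := Real.sqrt_mul (by positivity) _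
  calc Real.sqrt ((a+c)^2 + (b+d)^2)
      ≤ Real.sqrt ((Real.sqrt (a^2+b^2) + Real.sqrt (c^2+d^2))^2) := by
        apply Real.sqrt_le_sqrt; nlinarith
    _ = _ := Real.sqrt_sq (by positivity)

lemma edist2_nonneg (x y : ℤ × ℤ) : 0 ≤ edist2 x y := Real.sqrt_nonneg _

lemma edist2_eq (x y : ℤ × ℤ) :
    edist2 x y = Real.sqrt (((x.1:ℝ) - y.1)^2 + ((x.2:ℝ) - y.2)^2) := by
  unfold edist2; push_cast; ring_nf

lemma edist2_tri (x y z : ℤ × ℤ) : edist2 x z ≤ edist2 x y + edist2 y z := by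
  rw [edist2_eq, edist2_eq, edist2_eq]
  have := sqrt_tri ((x.1:ℝ) - y.1) ((x.2:ℝ) - y.2) ((y.1:ℝ) - z.1) ((y.2:ℝ) - z.2)
  have e : ((x.1:ℝ) - z.1)^2 + ((x.2:ℝ) - z.2)^2
      = (((x.1:ℝ) - y.1) + ((y.1:ℝ) - z.1))^2 + (((x.2:ℝ) - y.2) + ((y.2:ℝ) - z.2))^2 := by ring
  rw [e]; exact this

lemma abs_coord1 (x y : ℤ × ℤ) : |(x.1:ℝ) - y.1| ≤ edist2 x y := by
  rw [edist2_eq, ← Real.sqrt_sq_eq_abs]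
  exact Real.sqrt_le_sqrt (by nlinarith [sq_nonneg ((x.2:ℝ) - y.2)])

lemma abs_coord2 (x y : ℤ × ℤ) : |(x.2:ℝ) - y.2| ≤ edist2 x y := by
  rw [edist2_eq, ← Real.sqrt_sq_eq_abs]
  exact Real.sqrt_le_sqrt (by nlinarith [sq_nonneg ((x.1:ℝ) - y.1)])

lemma edist2_le_l1 (x y : ℤ × ℤ) : edist2 x y ≤ |(x.1:ℝ) - y.1| + |(x.2:ℝ) - y.2| := by
  rw [edist2_eq]
  rw [← Real.sqrt_sq (by positivity : (0:ℝ) ≤ |(x.1:ℝ) - y.1| + |(x.2:ℝ) - y.2|)]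
  apply Real.sqrt_le_sqrt
  have h1 := abs_nonneg ((x.1:ℝ) - y.1)
  have h2 := abs_nonneg ((x.2:ℝ) - y.2)
  nlinarith [sq_abs ((x.1:ℝ) - y.1), sq_abs ((x.2:ℝ) - y.2), mul_nonneg h1 h2]

lemma l1_le_edist2 (x y : ℤ × ℤ) : |(x.1:ℝ) - y.1| + |(x.2:ℝ) - y.2| ≤ 3/2 * edist2 x y := by
  rw [edist2_eq]
  have h := Real.sq_sqrt (by positivity : (0:ℝ) ≤ ((x.1:ℝ) - y.1)^2 + ((x.2:ℝ) - y.2)^2)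
  have hn := Real.sqrt_nonneg (((x.1:ℝ) - y.1)^2 + ((x.2:ℝ) - y.2)^2)
  nlinarith [sq_abs ((x.1:ℝ) - y.1), sq_abs ((x.2:ℝ) - y.2),
    sq_nonneg (|(x.1:ℝ) - y.1| - |(x.2:ℝ) - y.2|), abs_nonneg ((x.1:ℝ) - y.1),
    abs_nonneg ((x.2:ℝ) - y.2),
    sq_nonneg (3/2 * Real.sqrt (((x.1:ℝ) - y.1)^2 + ((x.2:ℝ) - y.2)^2) - (|(x.1:ℝ) - y.1| + |(x.2:ℝ) - y.2|))]


lemma edist2_symm (x y : ℤ × ℤ) : edist2 x y = edist2 y x := by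
  rw [edist2_eq, edist2_eq]
  congr 1
  ring

lemma one_le_edist2 (x y : ℤ × ℤ) (h : x ≠ y) : 1 ≤ edist2 x y := by
  rw [edist2_eq]
  have key : ∀ a b : ℤ, a ≠ 0 → (1:ℝ) ≤ (a:ℝ)^2 + (b:ℝ)^2 := by
    intro a b ha
    have h1 : 1 ≤ |a| := Int.one_le_abs (by omega)
    have h2 : (1:ℝ) ≤ |(a:ℝ)| := by
      rw [← Int.cast_abs]; exact_mod_cast h1
    nlinarith [sq_abs (a:ℝ), sq_nonneg (b:ℝ), abs_nonneg (a:ℝ)]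
  have h1 : (1:ℝ) ≤ ((x.1:ℝ) - y.1)^2 + ((x.2:ℝ) - y.2)^2 := by
    have : x.1 ≠ y.1 ∨ x.2 ≠ y.2 := by
      by_contra hc; push_neg at hc; exact h (Prod.ext hc.1 hc.2)
    rcases this with h' | h'
    · have := key (x.1 - y.1) (x.2 - y.2) (by omega); push_cast at this; linarith
    · have := key (x.2 - y.2) (x.1 - y.1) (by omega); push_cast at this; linarith
  calc (1:ℝ) = Real.sqrt 1 := (Real.sqrt_one).symm
    _ ≤ _ := Real.sqrt_le_sqrt h1

lemma edist2_zero_self (x : ℤ × ℤ) : edist2 x x = 0 := by simp [edist2]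


set_option maxHeartbeats 1000000 in
lemma core_max (θ M : ℝ) (hθ0 : 0 < θ) (hθ1 : θ < 1) (hM : 0 ≤ M) (r : ℤ) (hr : 2 ≤ r)
    (v : ℤ × ℤ → ℝ) (a b : ℤ × ℤ → ℤ)
    (hfin : {x : ℤ × ℤ | 0 ≤ a x ∧ a x ≤ r ∧ |b x| ≤ r}.Finite)
    (hsa : ∀ x : ℤ × ℤ, a (x + (1,0)) + a (x + (-1,0)) + a (x + (0,1)) + a (x + (0,-1)) = 4 * a x)
    (hsq : ∀ x : ℤ × ℤ, (b (x+(1,0))^2 - a (x+(1,0))^2) + (b (x+(-1,0))^2 - a (x+(-1,0))^2)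
        + (b (x+(0,1))^2 - a (x+(0,1))^2) + (b (x+(0,-1))^2 - a (x+(0,-1))^2)
        = 4 * (b x^2 - a x^2))
    (hstep : ∀ x : ℤ × ℤ, ∀ d : ℤ × ℤ, d = (1,0) ∨ d = (-1,0) ∨ d = (0,1) ∨ d = (0,-1) →
        |a (x+d) - a x| ≤ 1 ∧ |b (x+d) - b x| ≤ 1)
    (hzero : ∀ x, a x = 0 → v x = 0)
    (hbdd : ∀ x, 0 ≤ a x → a x ≤ r → |b x| ≤ r → |v x| ≤ 2 * M)
    (heq : ∀ x, 1 ≤ a x → a x ≤ r - 1 → |b x| ≤ r - 1 →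
        v x = θ / 4 * (v (x+(1,0)) + v (x+(-1,0)) + v (x+(0,1)) + v (x+(0,-1)))) :
    ∀ x, a x = 1 → b x = 0 → |v x| ≤ 4 * M / r := by
  intro x₀ ha₀ hb₀
  have hrR : (0:ℝ) < (r:ℝ) := by exact_mod_cast (by omega : (0:ℤ) < r)
  set ψ : ℤ × ℤ → ℝ := fun x =>
    (a x : ℝ)/r + (((b x:ℝ))^2 - ((a x:ℝ))^2 + (r:ℝ) * (a x)) / (r:ℝ)^2 with hψ
  set S : Set (ℤ × ℤ) := {x : ℤ × ℤ | 0 ≤ a x ∧ a x ≤ r ∧ |b x| ≤ r} with hS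
  have hψmul : ∀ x : ℤ × ℤ, ψ x * (r:ℝ)^2
      = (r:ℝ) * (a x : ℝ) + (((b x:ℝ))^2 - ((a x:ℝ))^2 + (r:ℝ) * (a x)) := by
    intro x; simp only [hψ]; field_simp
  have hψ0 : ∀ x ∈ S, 0 ≤ ψ x := by
    rintro x ⟨h1, h2, h3⟩
    have c1 : (0:ℝ) ≤ (a x : ℝ) := by exact_mod_cast h1
    have c2 : (a x : ℝ) ≤ (r:ℝ) := by exact_mod_cast h2
    have hr2 : (0:ℝ) < (r:ℝ)^2 := by positivity
    nlinarith [hψmul x, sq_nonneg ((b x : ℝ)), mul_nonneg c1 (sub_nonneg.2 c2), hr2]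
  set g : ℤ × ℤ → ℝ := fun x => |v x| - 2 * M * ψ x with hg
  have hx₀S : x₀ ∈ S := by
    refine ⟨by omega, by omega, ?_⟩
    rw [hb₀]; simp; omega
  have hne : (hfin.toFinset).Nonempty := ⟨x₀, hfin.mem_toFinset.2 hx₀S⟩
  obtain ⟨w, hwS', hwmax⟩ := Finset.exists_max_image hfin.toFinset g hne
  rw [hfin.mem_toFinset] at hwS'
  obtain ⟨h1, h2, h3⟩ := hwS'
  have hmax : ∀ y ∈ S, g y ≤ g w := fun y hy => hwmax y (hfin.mem_toFinset.2 hy)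
  have hgw : g w ≤ 0 := by
    by_cases hint : 1 ≤ a w ∧ a w ≤ r - 1 ∧ |b w| ≤ r - 1
    · obtain ⟨i1, i2, i3⟩ := hint
      have i3' := abs_le.1 i3
      have hnbrS : ∀ d : ℤ × ℤ, d = (1,0) ∨ d = (-1,0) ∨ d = (0,1) ∨ d = (0,-1) →
          (w + d) ∈ S := by
        intro d hd
        obtain ⟨hda, hdb⟩ := hstep w d hd
        have hda' := abs_le.1 hda
        have hdb' := abs_le.1 hdb
        exact ⟨by omega, by omega, abs_le.2 (by omega)⟩
      have m1 := hnbrS (1,0) (by tauto)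
      have m2 := hnbrS (-1,0) (by tauto)
      have m3 := hnbrS (0,1) (by tauto)
      have m4 := hnbrS (0,-1) (by tauto)
      have e1 : ((a (w+(1,0)) : ℝ) + (a (w+(-1,0)) : ℝ) + (a (w+(0,1)) : ℝ) + (a (w+(0,-1)) : ℝ)) = 4 * (a w : ℝ) := by exact_mod_cast congrArg (Int.cast : ℤ → ℝ) (hsa w)
      have e3 : (((b (w+(1,0)):ℝ))^2 - ((a (w+(1,0)):ℝ))^2) + (((b (w+(-1,0)):ℝ))^2 - ((a (w+(-1,0)):ℝ))^2) + (((b (w+(0,1)):ℝ))^2 - ((a (w+(0,1)):ℝ))^2) + (((b (w+(0,-1)):ℝ))^2 - ((a (w+(0,-1)):ℝ))^2) = 4 * (((b w:ℝ))^2 - ((a w:ℝ))^2) := by exact_mod_cast congrArg (Int.cast : ℤ → ℝ) (hsq w)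
      have hψavg : ψ (w+(1,0)) + ψ (w+(-1,0)) + ψ (w+(0,1)) + ψ (w+(0,-1)) = 4 * ψ w := by
        have h4 := hψmul (w+(1,0)); have h5 := hψmul (w+(-1,0))
        have h6 := hψmul (w+(0,1)); have h7 := hψmul (w+(0,-1))
        have h8 := hψmul w
        have hr2 : (0:ℝ) < (r:ℝ)^2 := by positivity
        nlinarith [h4, h5, h6, h7, h8, e1, e3]
      have hveq := heq w i1 i2 i3
      have habs : |v w| ≤ θ/4 * (|v (w+(1,0))| + |v (w+(-1,0))| + |v (w+(0,1))| + |v (w+(0,-1))|) := by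
        rw [hveq, abs_mul, abs_of_pos (by positivity : (0:ℝ) < θ/4)]
        gcongr
        calc |v (w+(1,0)) + v (w+(-1,0)) + v (w+(0,1)) + v (w+(0,-1))|
            ≤ |v (w+(1,0)) + v (w+(-1,0)) + v (w+(0,1))| + |v (w+(0,-1))| := abs_add_le _ _
          _ ≤ |v (w+(1,0)) + v (w+(-1,0))| + |v (w+(0,1))| + |v (w+(0,-1))| := by
              linarith [abs_add_le (v (w+(1,0)) + v (w+(-1,0))) (v (w+(0,1)))]
          _ ≤ |v (w+(1,0))| + |v (w+(-1,0))| + |v (w+(0,1))| + |v (w+(0,-1))| := by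
              linarith [abs_add_le (v (w+(1,0))) (v (w+(-1,0)))]
      have key : g w ≤ θ * g w := by
        have p1 := hψ0 _ m1; have p2 := hψ0 _ m2; have p3 := hψ0 _ m3; have p4 := hψ0 _ m4
        have q1 := hmax _ m1; have q2 := hmax _ m2; have q3 := hmax _ m3; have q4 := hmax _ m4
        simp only [hg] at q1 q2 q3 q4 ⊢
        nlinarith [habs, hψavg, mul_nonneg hM p1, mul_nonneg hM p2,
          mul_nonneg hM p3, mul_nonneg hM p4, hθ0.le, hθ1.le,
          mul_le_mul_of_nonneg_left q1 (le_of_lt hθ0),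
          mul_le_mul_of_nonneg_left q2 (le_of_lt hθ0),
          mul_le_mul_of_nonneg_left q3 (le_of_lt hθ0),
          mul_le_mul_of_nonneg_left q4 (le_of_lt hθ0)]
      nlinarith [key]
    · push_neg at hint
      by_cases hz : a w = 0
      · have hv0 : v w = 0 := hzero w hz
        simp only [hg, hv0, abs_zero]
        nlinarith [hψ0 w ⟨h1, h2, h3⟩]
      · have hψ1 : 1 ≤ ψ w := by
          have c1 : (0:ℝ) ≤ (a w : ℝ) := by exact_mod_cast h1
          have c2 : (a w : ℝ) ≤ (r:ℝ) := by exact_mod_cast h2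
          have hr2 : (0:ℝ) < (r:ℝ)^2 := by positivity
          rcases (by omega : a w = r ∨ |b w| = r) with hc | hc
          · have hc' : (a w : ℝ) = (r:ℝ) := by exact_mod_cast hc
            nlinarith [hψmul w, sq_nonneg ((b w : ℝ))]
          · have hc' : |(b w : ℝ)| = (r:ℝ) := by rw [← Int.cast_abs]; exact_mod_cast hc
            have hb2 : ((b w:ℝ))^2 = (r:ℝ)^2 := by rw [← sq_abs, hc']
            nlinarith [hψmul w]
        have hbw := hbdd w h1 h2 h3
        simp only [hg]
        nlinarith
  have hfinal := le_trans (hmax x₀ hx₀S) hgw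
  have hψx₀ : ψ x₀ * (r:ℝ)^2 = 2*(r:ℝ) - 1 := by
    rw [hψmul x₀, ha₀, hb₀]; push_cast; ring
  simp only [hg] at hfinal
  have hrr : (2:ℝ) ≤ (r:ℝ) := by exact_mod_cast hr
  have hr2 : (0:ℝ) < (r:ℝ)^2 := by positivity
  have hv : |v x₀| ≤ 2 * M * ψ x₀ := by linarith
  have hψval : ψ x₀ = (2*(r:ℝ) - 1)/(r:ℝ)^2 := by
    rw [eq_div_iff (ne_of_gt hr2)]; exact hψx₀
  have hψb : ψ x₀ ≤ 2 / (r:ℝ) := by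
    rw [hψval, div_le_div_iff₀ hr2 hrR]
    nlinarith
  calc |v x₀| ≤ 2 * M * ψ x₀ := hv
    _ ≤ 2 * M * (2 / (r:ℝ)) := by gcongr
    _ = 4 * M / r := by ring


-- generic reflection difference estimate
lemma refl_est (N : ℕ) (hN : 1 ≤ N) (R M : ℝ) (hR : 64 ≤ R) (u : ℤ × ℤ → ℝ)
    (hu : ∀ x : ℤ × ℤ, edist2 x 0 ≤ 2*R - 1 →
      (1 + ((N:ℝ)^2)⁻¹) * u x = 1/4 * (u (x+(1,0)) + u (x+(-1,0)) + u (x+(0,1)) + u (x+(0,-1))))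
    (hM : 0 ≤ M) (hMz : ∀ z : ℤ × ℤ, edist2 z 0 ≤ 2*R → |u z| ≤ M)
    (r : ℤ) (hr1 : 2 ≤ r) (hRr : R/16 ≤ (r:ℝ))
    (σ : ℤ × ℤ → ℤ × ℤ) (a b : ℤ × ℤ → ℤ)
    (hfin : {x : ℤ × ℤ | 0 ≤ a x ∧ a x ≤ r ∧ |b x| ≤ r}.Finite)
    (hsa : ∀ x : ℤ × ℤ, a (x + (1,0)) + a (x + (-1,0)) + a (x + (0,1)) + a (x + (0,-1)) = 4 * a x)
    (hsq : ∀ x : ℤ × ℤ, (b (x+(1,0))^2 - a (x+(1,0))^2) + (b (x+(-1,0))^2 - a (x+(-1,0))^2)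
        + (b (x+(0,1))^2 - a (x+(0,1))^2) + (b (x+(0,-1))^2 - a (x+(0,-1))^2)
        = 4 * (b x^2 - a x^2))
    (hstep : ∀ x : ℤ × ℤ, ∀ d : ℤ × ℤ, d = (1,0) ∨ d = (-1,0) ∨ d = (0,1) ∨ d = (0,-1) →
        |a (x+d) - a x| ≤ 1 ∧ |b (x+d) - b x| ≤ 1)
    (hfix : ∀ x, a x = 0 → σ x = x)
    (hsig : ∀ x : ℤ × ℤ, u (σ (x+(1,0))) + u (σ (x+(-1,0))) + u (σ (x+(0,1))) + u (σ (x+(0,-1)))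
        = u (σ x+(1,0)) + u (σ x+(-1,0)) + u (σ x+(0,1)) + u (σ x+(0,-1)))
    (hgeom : ∀ x, 0 ≤ a x → a x ≤ r → |b x| ≤ r →
        edist2 x 0 ≤ 2*R - 1 ∧ edist2 (σ x) 0 ≤ 2*R - 1) :
    ∀ P, a P = 1 → b P = 0 → |u P - u (σ P)| ≤ 64 * M / R := by
  intro P haP hbP
  have hN1 : (1:ℝ) ≤ (N:ℝ) := by exact_mod_cast hN
  set m : ℝ := ((N:ℝ)^2)⁻¹ with hm
  have hm0 : 0 < m := by positivity
  set θ : ℝ := (1+m)⁻¹ with hθ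
  have h1m : (0:ℝ) < 1 + m := by linarith
  have hθ0 : 0 < θ := by positivity
  have hθ1 : θ < 1 := by
    rw [hθ, inv_lt_one_iff₀]; right; linarith
  have hθm : θ * (1+m) = 1 := inv_mul_cancel₀ (ne_of_gt h1m)
  set v : ℤ × ℤ → ℝ := fun x => u x - u (σ x) with hv
  have hzero : ∀ x, a x = 0 → v x = 0 := by
    intro x hx; simp [hv, hfix x hx]
  have hbdd : ∀ x, 0 ≤ a x → a x ≤ r → |b x| ≤ r → |v x| ≤ 2 * M := by
    intro x h1 h2 h3
    obtain ⟨g1, g2⟩ := hgeom x h1 h2 h3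
    have b1 := hMz x (by linarith)
    have b2 := hMz (σ x) (by linarith)
    calc |v x| ≤ |u x| + |u (σ x)| := abs_sub _ _
      _ ≤ 2 * M := by linarith
  have heq : ∀ x, 1 ≤ a x → a x ≤ r - 1 → |b x| ≤ r - 1 →
      v x = θ / 4 * (v (x+(1,0)) + v (x+(-1,0)) + v (x+(0,1)) + v (x+(0,-1))) := by
    intro x h1 h2 h3
    have h1' : 0 ≤ a x := by omega
    have h2' : a x ≤ r := by omega
    have h3' : |b x| ≤ r := by have := abs_le.1 h3; exact abs_le.2 (by omega)
    obtain ⟨g1, g2⟩ := hgeom x h1' h2' h3'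
    have hx := hu x g1
    have hσx := hu (σ x) g2
    have hs := hsig x
    simp only [hv]
    linear_combination (θ) * hx - θ * hσx + (θ/4) * hs - (u x - u (σ x)) * hθm
  have := core_max θ M hθ0 hθ1 hM r hr1 v a b hfin hsa hsq hstep hzero hbdd heq P haP hbP
  have hR0 : (0:ℝ) < R := by linarith
  have hrpos : (0:ℝ) < (r:ℝ) := by exact_mod_cast (by omega : (0:ℤ) < r)
  calc |u P - u (σ P)| = |v P| := rfl
    _ ≤ 4 * M / r := this
    _ ≤ 64 * M / R := by
      rw [div_le_div_iff₀ hrpos hR0]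
      nlinarith [hRr, hM, hR0]

-- finiteness helper
lemma fin_helper (a b : ℤ × ℤ → ℤ) (r : ℤ)
    (hinj : ∀ x y : ℤ × ℤ, a x = a y → b x = b y → x = y) :
    {x : ℤ × ℤ | 0 ≤ a x ∧ a x ≤ r ∧ |b x| ≤ r}.Finite := by
  have hsub : {x : ℤ × ℤ | 0 ≤ a x ∧ a x ≤ r ∧ |b x| ≤ r} ⊆
      (fun x : ℤ × ℤ => ((a x, b x) : ℤ × ℤ)) ⁻¹' (Set.Icc (0, -r) (r, r)) := by
    rintro x ⟨h1, h2, h3⟩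
    have := abs_le.1 h3
    simp only [Set.mem_preimage, Set.mem_Icc, Prod.mk_le_mk]
    exact ⟨⟨h1, this.1⟩, ⟨h2, this.2⟩⟩
  apply Set.Finite.subset _ hsub
  apply Set.Finite.preimage _ (Set.finite_Icc _ _)
  intro x _ y _ h
  simp only [Prod.mk.injEq] at h
  exact hinj x y h.1 h.2

-- box geometry helper
lemma edist2_box (x P : ℤ × ℤ) (s : ℤ) (h1 : |x.1 - P.1| ≤ s) (h2 : |x.2 - P.2| ≤ s) :
    edist2 x 0 ≤ edist2 P 0 + 2*(s:ℝ) := by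
  have t := edist2_tri x P 0
  have l1 := edist2_le_l1 x P
  have c1 : |(x.1:ℝ) - P.1| ≤ (s:ℝ) := by
    rw [show ((x.1:ℝ) - P.1) = ((x.1 - P.1 : ℤ) : ℝ) by push_cast; ring, ← Int.cast_abs]
    exact_mod_cast h1
  have c2 : |(x.2:ℝ) - P.2| ≤ (s:ℝ) := by
    rw [show ((x.2:ℝ) - P.2) = ((x.2 - P.2 : ℤ) : ℝ) by push_cast; ring, ← Int.cast_abs]
    exact_mod_cast h2
  linarith

lemma rfacts (R : ℝ) (hR : 64 ≤ R) :
    2 ≤ ⌊R/8⌋ ∧ R/16 ≤ (⌊R/8⌋:ℝ) ∧ (⌊R/8⌋:ℝ) ≤ R/8 := by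
  have h1 : (⌊R/8⌋:ℝ) ≤ R/8 := Int.floor_le _
  have h2 : R/8 - 1 ≤ (⌊R/8⌋:ℝ) := by linarith [Int.sub_one_lt_floor (R/8)]
  refine ⟨?_, by linarith, h1⟩
  rw [Int.le_floor]; push_cast; linarith

lemma step20 (N : ℕ) (hN : 1 ≤ N) (R M : ℝ) (hR : 64 ≤ R) (u : ℤ × ℤ → ℝ)
    (hu : ∀ x : ℤ × ℤ, edist2 x 0 ≤ 2*R - 1 →
      (1 + ((N:ℝ)^2)⁻¹) * u x = 1/4 * (u (x+(1,0)) + u (x+(-1,0)) + u (x+(0,1)) + u (x+(0,-1))))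
    (hM : 0 ≤ M) (hMz : ∀ z : ℤ × ℤ, edist2 z 0 ≤ 2*R → |u z| ≤ M) :
    ∀ P : ℤ × ℤ, edist2 P 0 ≤ 3/2 * R + 2 → |u P - u (P + (2,0))| ≤ 64 * M / R := by
  intro P hP
  obtain ⟨hr1, hRr, hrR⟩ := rfacts R hR
  set r : ℤ := ⌊R/8⌋ with hrdef
  set σ : ℤ × ℤ → ℤ × ℤ := fun y => (2*P.1 + 2 - y.1, y.2) with hσ
  set a : ℤ × ℤ → ℤ := fun y => P.1 + 1 - y.1 with ha
  set b : ℤ × ℤ → ℤ := fun y => y.2 - P.2 with hb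
  have key := refl_est N hN R M hR u hu hM hMz r hr1 hRr σ a b
    (fin_helper a b r (by
      intro x y h1 h2
      simp only [ha, hb] at h1 h2
      exact Prod.ext (by omega) (by omega)))
    (by intro x; simp only [ha, Prod.fst_add]; ring)
    (by intro x; simp only [ha, hb, Prod.fst_add, Prod.snd_add]; ring)
    (by
      intro x d hd
      rcases hd with h | h | h | h <;> subst h <;>
        simp only [ha, hb, Prod.fst_add, Prod.snd_add] <;> norm_num)
    (by
      intro x hx
      simp only [ha] at hx
      simp only [hσ]
      have h2 : 2*P.1 + 2 - x.1 = x.1 := by omega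
      rw [h2])
    (by
      intro x
      have e1 : σ (x+(1,0)) = σ x + (-1,0) := by
        simp only [hσ, Prod.ext_iff, Prod.fst_add, Prod.snd_add]; norm_num; ring
      have e2 : σ (x+(-1,0)) = σ x + (1,0) := by
        simp only [hσ, Prod.ext_iff, Prod.fst_add, Prod.snd_add]; norm_num; ring
      have e3 : σ (x+(0,1)) = σ x + (0,1) := by
        simp only [hσ, Prod.ext_iff, Prod.fst_add, Prod.snd_add]; norm_num
      have e4 : σ (x+(0,-1)) = σ x + (0,-1) := by
        simp only [hσ, Prod.ext_iff, Prod.fst_add, Prod.snd_add]; norm_num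
      rw [e1, e2, e3, e4]; ring)
    (by
      intro x h1 h2 h3
      have hb' := abs_le.1 h3
      simp only [ha, hb] at h1 h2 hb'
      have c1 : |x.1 - P.1| ≤ r + 3 := abs_le.2 (by omega)
      have c2 : |x.2 - P.2| ≤ r + 3 := abs_le.2 (by omega)
      have d1 : |(σ x).1 - P.1| ≤ r + 3 := by simp only [hσ]; exact abs_le.2 (by omega)
      have d2 : |(σ x).2 - P.2| ≤ r + 3 := by simp only [hσ]; exact abs_le.2 (by omega)
      have g1 := edist2_box x P (r+3) c1 c2
      have g2 := edist2_box (σ x) P (r+3) d1 d2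
      have hc : ((r+3 : ℤ):ℝ) ≤ R/8 + 3 := by push_cast; linarith
      constructor <;> [skip; skip] <;> push_cast at g1 g2 <;> nlinarith)
  have haP : a P = 1 := by simp [ha]
  have hbP : b P = 0 := by simp [hb]
  have hσP : σ P = P + (2,0) := by
    simp only [hσ, Prod.ext_iff, Prod.fst_add, Prod.snd_add]; norm_num; ring
  have := key P haP hbP
  rwa [hσP] at this

lemma step02 (N : ℕ) (hN : 1 ≤ N) (R M : ℝ) (hR : 64 ≤ R) (u : ℤ × ℤ → ℝ)
    (hu : ∀ x : ℤ × ℤ, edist2 x 0 ≤ 2*R - 1 →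
      (1 + ((N:ℝ)^2)⁻¹) * u x = 1/4 * (u (x+(1,0)) + u (x+(-1,0)) + u (x+(0,1)) + u (x+(0,-1))))
    (hM : 0 ≤ M) (hMz : ∀ z : ℤ × ℤ, edist2 z 0 ≤ 2*R → |u z| ≤ M) :
    ∀ P : ℤ × ℤ, edist2 P 0 ≤ 3/2 * R + 2 → |u P - u (P + (0,2))| ≤ 64 * M / R := by
  intro P hP
  obtain ⟨hr1, hRr, hrR⟩ := rfacts R hR
  set r : ℤ := ⌊R/8⌋ with hrdef
  set σ : ℤ × ℤ → ℤ × ℤ := fun y => (y.1, 2*P.2 + 2 - y.2) with hσ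
  set a : ℤ × ℤ → ℤ := fun y => P.2 + 1 - y.2 with ha
  set b : ℤ × ℤ → ℤ := fun y => y.1 - P.1 with hb
  have key := refl_est N hN R M hR u hu hM hMz r hr1 hRr σ a b
    (fin_helper a b r (by
      intro x y h1 h2
      simp only [ha, hb] at h1 h2
      exact Prod.ext (by omega) (by omega)))
    (by intro x; simp only [ha, Prod.snd_add]; ring)
    (by intro x; simp only [ha, hb, Prod.fst_add, Prod.snd_add]; ring)
    (by
      intro x d hd
      rcases hd with h | h | h | h <;> subst h <;>
        refine ⟨abs_le.2 ⟨?_, ?_⟩, abs_le.2 ⟨?_, ?_⟩⟩ <;>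
        simp only [ha, hb, Prod.fst_add, Prod.snd_add] <;> omega)
    (by
      intro x hx
      simp only [ha] at hx
      simp only [hσ]
      have h2 : 2*P.2 + 2 - x.2 = x.2 := by omega
      rw [h2])
    (by
      intro x
      have e1 : σ (x+(1,0)) = σ x + (1,0) := by
        simp only [hσ, Prod.ext_iff, Prod.fst_add, Prod.snd_add]; norm_num
      have e2 : σ (x+(-1,0)) = σ x + (-1,0) := by
        simp only [hσ, Prod.ext_iff, Prod.fst_add, Prod.snd_add]; norm_num
      have e3 : σ (x+(0,1)) = σ x + (0,-1) := by
        simp only [hσ, Prod.ext_iff, Prod.fst_add, Prod.snd_add]; norm_num; ring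
      have e4 : σ (x+(0,-1)) = σ x + (0,1) := by
        simp only [hσ, Prod.ext_iff, Prod.fst_add, Prod.snd_add]; norm_num; ring
      rw [e1, e2, e3, e4]; ring)
    (by
      intro x h1 h2 h3
      have hb' := abs_le.1 h3
      simp only [ha, hb] at h1 h2 hb'
      have c1 : |x.1 - P.1| ≤ r + 3 := abs_le.2 (by omega)
      have c2 : |x.2 - P.2| ≤ r + 3 := abs_le.2 (by omega)
      have d1 : |(σ x).1 - P.1| ≤ r + 3 := by simp only [hσ]; exact abs_le.2 (by omega)
      have d2 : |(σ x).2 - P.2| ≤ r + 3 := by simp only [hσ]; exact abs_le.2 (by omega)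
      have g1 := edist2_box x P (r+3) c1 c2
      have g2 := edist2_box (σ x) P (r+3) d1 d2
      have hc : ((r+3 : ℤ):ℝ) ≤ R/8 + 3 := by push_cast; linarith
      constructor <;> [skip; skip] <;> push_cast at g1 g2 <;> nlinarith)
  have haP : a P = 1 := by simp [ha]
  have hbP : b P = 0 := by simp [hb]
  have hσP : σ P = P + (0,2) := by
    simp only [hσ, Prod.ext_iff, Prod.fst_add, Prod.snd_add]; norm_num; ring
  have := key P haP hbP
  rwa [hσP] at this

lemma step11 (N : ℕ) (hN : 1 ≤ N) (R M : ℝ) (hR : 64 ≤ R) (u : ℤ × ℤ → ℝ)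
    (hu : ∀ x : ℤ × ℤ, edist2 x 0 ≤ 2*R - 1 →
      (1 + ((N:ℝ)^2)⁻¹) * u x = 1/4 * (u (x+(1,0)) + u (x+(-1,0)) + u (x+(0,1)) + u (x+(0,-1))))
    (hM : 0 ≤ M) (hMz : ∀ z : ℤ × ℤ, edist2 z 0 ≤ 2*R → |u z| ≤ M) :
    ∀ P : ℤ × ℤ, edist2 P 0 ≤ 3/2 * R + 2 → |u P - u (P + (1,1))| ≤ 64 * M / R := by
  intro P hP
  obtain ⟨hr1, hRr, hrR⟩ := rfacts R hR
  set r : ℤ := ⌊R/8⌋ with hrdef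
  set σ : ℤ × ℤ → ℤ × ℤ := fun y => (P.1 + P.2 + 1 - y.2, P.1 + P.2 + 1 - y.1) with hσ
  set a : ℤ × ℤ → ℤ := fun y => P.1 + P.2 + 1 - y.1 - y.2 with ha
  set b : ℤ × ℤ → ℤ := fun y => y.1 - y.2 - P.1 + P.2 with hb
  have key := refl_est N hN R M hR u hu hM hMz r hr1 hRr σ a b
    (fin_helper a b r (by
      intro x y h1 h2
      simp only [ha, hb] at h1 h2
      exact Prod.ext (by omega) (by omega)))
    (by intro x; simp only [ha, Prod.fst_add, Prod.snd_add]; ring)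
    (by intro x; simp only [ha, hb, Prod.fst_add, Prod.snd_add]; ring)
    (by
      intro x d hd
      rcases hd with h | h | h | h <;> subst h <;>
        refine ⟨abs_le.2 ⟨?_, ?_⟩, abs_le.2 ⟨?_, ?_⟩⟩ <;>
        simp only [ha, hb, Prod.fst_add, Prod.snd_add] <;> omega)
    (by
      intro x hx
      simp only [ha] at hx
      simp only [hσ]
      have h2 : P.1 + P.2 + 1 - x.2 = x.1 := by omega
      have h3 : P.1 + P.2 + 1 - x.1 = x.2 := by omega
      rw [h2, h3])
    (by
      intro x
      have e1 : σ (x+(1,0)) = σ x + (0,-1) := by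
        simp only [hσ, Prod.ext_iff, Prod.fst_add, Prod.snd_add]; norm_num; ring
      have e2 : σ (x+(-1,0)) = σ x + (0,1) := by
        simp only [hσ, Prod.ext_iff, Prod.fst_add, Prod.snd_add]; norm_num; ring
      have e3 : σ (x+(0,1)) = σ x + (-1,0) := by
        simp only [hσ, Prod.ext_iff, Prod.fst_add, Prod.snd_add]; norm_num; ring
      have e4 : σ (x+(0,-1)) = σ x + (1,0) := by
        simp only [hσ, Prod.ext_iff, Prod.fst_add, Prod.snd_add]; norm_num; ring
      rw [e1, e2, e3, e4]; ring)
    (by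
      intro x h1 h2 h3
      have hb' := abs_le.1 h3
      simp only [ha, hb] at h1 h2 hb'
      have c1 : |x.1 - P.1| ≤ r + 3 := abs_le.2 (by omega)
      have c2 : |x.2 - P.2| ≤ r + 3 := abs_le.2 (by omega)
      have d1 : |(σ x).1 - P.1| ≤ r + 3 := by simp only [hσ]; exact abs_le.2 (by omega)
      have d2 : |(σ x).2 - P.2| ≤ r + 3 := by simp only [hσ]; exact abs_le.2 (by omega)
      have g1 := edist2_box x P (r+3) c1 c2
      have g2 := edist2_box (σ x) P (r+3) d1 d2
      have hc : ((r+3 : ℤ):ℝ) ≤ R/8 + 3 := by push_cast; linarith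
      constructor <;> [skip; skip] <;> push_cast at g1 g2 <;> nlinarith)
  have haP : a P = 1 := by simp [ha]; omega
  have hbP : b P = 0 := by simp [hb]
  have hσP : σ P = P + (1,1) := by
    simp only [hσ, Prod.ext_iff, Prod.fst_add, Prod.snd_add]; constructor <;> ring
  have := key P haP hbP
  rwa [hσP] at this

lemma step1m1 (N : ℕ) (hN : 1 ≤ N) (R M : ℝ) (hR : 64 ≤ R) (u : ℤ × ℤ → ℝ)
    (hu : ∀ x : ℤ × ℤ, edist2 x 0 ≤ 2*R - 1 →
      (1 + ((N:ℝ)^2)⁻¹) * u x = 1/4 * (u (x+(1,0)) + u (x+(-1,0)) + u (x+(0,1)) + u (x+(0,-1))))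
    (hM : 0 ≤ M) (hMz : ∀ z : ℤ × ℤ, edist2 z 0 ≤ 2*R → |u z| ≤ M) :
    ∀ P : ℤ × ℤ, edist2 P 0 ≤ 3/2 * R + 2 → |u P - u (P + (1,-1))| ≤ 64 * M / R := by
  intro P hP
  obtain ⟨hr1, hRr, hrR⟩ := rfacts R hR
  set r : ℤ := ⌊R/8⌋ with hrdef
  set σ : ℤ × ℤ → ℤ × ℤ := fun y => (y.2 + (P.1 + 1 - P.2), y.1 - (P.1 + 1 - P.2)) with hσ
  set a : ℤ × ℤ → ℤ := fun y => P.1 + 1 - P.2 - y.1 + y.2 with ha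
  set b : ℤ × ℤ → ℤ := fun y => y.1 + y.2 - P.1 - P.2 with hb
  have key := refl_est N hN R M hR u hu hM hMz r hr1 hRr σ a b
    (fin_helper a b r (by
      intro x y h1 h2
      simp only [ha, hb] at h1 h2
      exact Prod.ext (by omega) (by omega)))
    (by intro x; simp only [ha, Prod.fst_add, Prod.snd_add]; ring)
    (by intro x; simp only [ha, hb, Prod.fst_add, Prod.snd_add]; ring)
    (by
      intro x d hd
      rcases hd with h | h | h | h <;> subst h <;>
        refine ⟨abs_le.2 ⟨?_, ?_⟩, abs_le.2 ⟨?_, ?_⟩⟩ <;>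
        simp only [ha, hb, Prod.fst_add, Prod.snd_add] <;> omega)
    (by
      intro x hx
      simp only [ha] at hx
      simp only [hσ]
      have h2 : x.2 + (P.1 + 1 - P.2) = x.1 := by omega
      have h3 : x.1 - (P.1 + 1 - P.2) = x.2 := by omega
      rw [h2, h3])
    (by
      intro x
      have e1 : σ (x+(1,0)) = σ x + (0,1) := by
        simp only [hσ, Prod.ext_iff, Prod.fst_add, Prod.snd_add]; constructor <;> ring
      have e2 : σ (x+(-1,0)) = σ x + (0,-1) := by
        simp only [hσ, Prod.ext_iff, Prod.fst_add, Prod.snd_add]; constructor <;> ring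
      have e3 : σ (x+(0,1)) = σ x + (1,0) := by
        simp only [hσ, Prod.ext_iff, Prod.fst_add, Prod.snd_add]; constructor <;> ring
      have e4 : σ (x+(0,-1)) = σ x + (-1,0) := by
        simp only [hσ, Prod.ext_iff, Prod.fst_add, Prod.snd_add]; constructor <;> ring
      rw [e1, e2, e3, e4]; ring)
    (by
      intro x h1 h2 h3
      have hb' := abs_le.1 h3
      simp only [ha, hb] at h1 h2 hb'
      have c1 : |x.1 - P.1| ≤ r + 3 := abs_le.2 (by omega)
      have c2 : |x.2 - P.2| ≤ r + 3 := abs_le.2 (by omega)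
      have d1 : |(σ x).1 - P.1| ≤ r + 3 := by simp only [hσ]; exact abs_le.2 (by omega)
      have d2 : |(σ x).2 - P.2| ≤ r + 3 := by simp only [hσ]; exact abs_le.2 (by omega)
      have g1 := edist2_box x P (r+3) c1 c2
      have g2 := edist2_box (σ x) P (r+3) d1 d2
      have hc : ((r+3 : ℤ):ℝ) ≤ R/8 + 3 := by push_cast; linarith
      constructor <;> [skip; skip] <;> push_cast at g1 g2 <;> nlinarith)
  have haP : a P = 1 := by simp only [ha]; omega
  have hbP : b P = 0 := by simp only [hb]; omega
  have hσP : σ P = P + (1,-1) := by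
    simp only [hσ, Prod.ext_iff, Prod.fst_add, Prod.snd_add]; constructor <;> ring
  have := key P haP hbP
  rwa [hσP] at this

lemma edist2_unit (x : ℤ × ℤ) (d : ℤ × ℤ)
    (hd : d = (1,0) ∨ d = (-1,0) ∨ d = (0,1) ∨ d = (0,-1)) : edist2 (x+d) x = 1 := by
  rcases hd with h | h | h | h <;> subst h <;>
    simp [edist2, Prod.fst_add, Prod.snd_add] <;> norm_num

lemma geom_bound (θ : ℝ) (h0 : 0 ≤ θ) (h1 : θ ≤ 1) (k : ℕ) :
    ((k:ℝ)+1) * (θ^k * (1 - θ)) ≤ 1 := by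
  have key : ∀ j : ℕ, ((j:ℝ)+1) * (θ^j * (1-θ)) ≤ 1 - θ^(j+1) := by
    intro j
    induction j with
    | zero => simp
    | succ n ih =>
      have hp : (0:ℝ) ≤ θ^n := pow_nonneg h0 n
      have hle : θ^(n+1) ≤ 1 := pow_le_one₀ h0 h1
      have hmul := mul_le_mul_of_nonneg_left ih h0
      have h3 := mul_le_mul_of_nonneg_right hle (by linarith : (0:ℝ) ≤ 1 - θ)
      simp only [pow_succ] at hmul hle h3 ⊢
      push_cast
      nlinarith [hmul, hle, hp, h3, mul_nonneg hp h0]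
  nlinarith [key k, pow_nonneg h0 (k+1)]

lemma decay (N : ℕ) (hN : 1 ≤ N) (R M : ℝ) (u : ℤ × ℤ → ℝ)
    (hu : ∀ x : ℤ × ℤ, edist2 x 0 ≤ 2*R - 1 →
      (1 + ((N:ℝ)^2)⁻¹) * u x = 1/4 * (u (x+(1,0)) + u (x+(-1,0)) + u (x+(0,1)) + u (x+(0,-1))))
    (hM : 0 ≤ M) (hMz : ∀ z : ℤ × ℤ, edist2 z 0 ≤ 2*R → |u z| ≤ M) :
    ∀ k : ℕ, ∀ x : ℤ × ℤ, edist2 x 0 + k ≤ 2*R → |u x| ≤ ((1 + ((N:ℝ)^2)⁻¹)⁻¹)^k * M := by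
  have hN1 : (1:ℝ) ≤ (N:ℝ) := by exact_mod_cast hN
  set m : ℝ := ((N:ℝ)^2)⁻¹ with hm
  have hm0 : 0 < m := by positivity
  set θ : ℝ := (1+m)⁻¹ with hθ
  have h1m : (0:ℝ) < 1 + m := by linarith
  have hθ0 : 0 < θ := by positivity
  have hθm : θ * (1+m) = 1 := inv_mul_cancel₀ (ne_of_gt h1m)
  intro k
  induction k with
  | zero => intro x hx; simpa using hMz x (by simpa using hx)
  | succ n ih =>
    intro x hx
    push_cast at hx
    have hx' : edist2 x 0 ≤ 2*R - 1 := by linarith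
    have heq := hu x hx'
    have hux : u x = θ/4 * (u (x+(1,0)) + u (x+(-1,0)) + u (x+(0,1)) + u (x+(0,-1))) := by
      linear_combination θ * heq - u x * hθm
    have hnbr : ∀ d : ℤ × ℤ, d = (1,0) ∨ d = (-1,0) ∨ d = (0,1) ∨ d = (0,-1) →
        |u (x+d)| ≤ θ^n * M := by
      intro d hd
      apply ih
      have h1 := edist2_tri (x+d) x 0
      have h2 := edist2_unit x d hd
      push_cast; linarith
    have b1 := hnbr (1,0) (by tauto)
    have b2 := hnbr (-1,0) (by tauto)
    have b3 := hnbr (0,1) (by tauto)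
    have b4 := hnbr (0,-1) (by tauto)
    have habs : |u x| ≤ θ/4 * (|u (x+(1,0))| + |u (x+(-1,0))| + |u (x+(0,1))| + |u (x+(0,-1))|) := by
      rw [hux, abs_mul, abs_of_pos (by positivity : (0:ℝ) < θ/4)]
      gcongr
      calc |u (x+(1,0)) + u (x+(-1,0)) + u (x+(0,1)) + u (x+(0,-1))|
          ≤ |u (x+(1,0)) + u (x+(-1,0)) + u (x+(0,1))| + |u (x+(0,-1))| := abs_add_le _ _
        _ ≤ |u (x+(1,0)) + u (x+(-1,0))| + |u (x+(0,1))| + |u (x+(0,-1))| := by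
            linarith [abs_add_le (u (x+(1,0)) + u (x+(-1,0))) (u (x+(0,1)))]
        _ ≤ |u (x+(1,0))| + |u (x+(-1,0))| + |u (x+(0,1))| + |u (x+(0,-1))| := by
            linarith [abs_add_le (u (x+(1,0))) (u (x+(-1,0)))]
    calc |u x| ≤ θ/4 * (|u (x+(1,0))| + |u (x+(-1,0))| + |u (x+(0,1))| + |u (x+(0,-1))|) := habs
      _ ≤ θ/4 * (4 * (θ^n * M)) := by gcongr <;> linarith
      _ = θ^(n+1) * M := by ring

set_option maxHeartbeats 2000000 in
lemma stepodd (N : ℕ) (hN : 1 ≤ N) (R M : ℝ) (hR : 64 ≤ R) (u : ℤ × ℤ → ℝ)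
    (hu : ∀ x : ℤ × ℤ, edist2 x 0 ≤ 2*R - 1 →
      (1 + ((N:ℝ)^2)⁻¹) * u x = 1/4 * (u (x+(1,0)) + u (x+(-1,0)) + u (x+(0,1)) + u (x+(0,-1))))
    (hM : 0 ≤ M) (hMz : ∀ z : ℤ × ℤ, edist2 z 0 ≤ 2*R → |u z| ≤ M) :
    ∀ x : ℤ × ℤ, edist2 x 0 ≤ 5/4 * R → |u x - u (x + (1,0))| ≤ 52 * M / R := by
  intro x hx
  have hN1 : (1:ℝ) ≤ (N:ℝ) := by exact_mod_cast hN
  set m : ℝ := ((N:ℝ)^2)⁻¹ with hm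
  have hm0 : 0 < m := by positivity
  set θ : ℝ := (1+m)⁻¹ with hθ
  have h1m : (0:ℝ) < 1 + m := by linarith
  have hθ0 : 0 < θ := by positivity
  have hθ1 : θ ≤ 1 := by
    rw [hθ]; rw [inv_le_one_iff₀]; right; linarith
  have hθm : θ * (1+m) = 1 := inv_mul_cancel₀ (ne_of_gt h1m)
  have hR0 : (0:ℝ) < R := by linarith
  have heq := hu x (by linarith)
  -- decomposition
  have hdec : u (x+(1,0)) - u x
      = θ/4 * ((u (x+(1,0)) - u (x+(-1,0))) + (u (x+(1,0)) - u (x+(0,1)))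
          + (u (x+(1,0)) - u (x+(0,-1)))) + (1-θ) * u (x+(1,0)) := by
    linear_combination (-θ) * heq + u x * hθm
  -- distances of nearby base points
  have hd1 : ∀ d : ℤ × ℤ, d = (1,0) ∨ d = (-1,0) ∨ d = (0,1) ∨ d = (0,-1) →
      edist2 (x+d) 0 ≤ 5/4 * R + 1 := by
    intro d hd
    have h1 := edist2_tri (x+d) x 0
    have h2 := edist2_unit x d hd
    linarith
  -- three even differences
  have e1 : x + (-1,0) + (2,0) = x + (1,0) := by
    refine Prod.ext ?_ ?_ <;> simp [Prod.fst_add, Prod.snd_add] <;> ring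
  have e2 : x + (0,-1) + (1,1) = x + (1,0) := by
    refine Prod.ext ?_ ?_ <;> simp [Prod.fst_add, Prod.snd_add] <;> ring
  have e3 : x + (0,1) + (1,-1) = x + (1,0) := by
    refine Prod.ext ?_ ?_ <;> simp [Prod.fst_add, Prod.snd_add] <;> ring
  have t1 : |u (x+(1,0)) - u (x+(-1,0))| ≤ 64 * M / R := by
    rw [abs_sub_comm, ← e1]
    exact step20 N hN R M hR u hu hM hMz (x+(-1,0)) (by linarith [hd1 (-1,0) (by tauto)])
  have t2 : |u (x+(1,0)) - u (x+(0,-1))| ≤ 64 * M / R := by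
    rw [abs_sub_comm, ← e2]
    exact step11 N hN R M hR u hu hM hMz (x+(0,-1)) (by linarith [hd1 (0,-1) (by tauto)])
  have t3 : |u (x+(1,0)) - u (x+(0,1))| ≤ 64 * M / R := by
    rw [abs_sub_comm, ← e3]
    exact step1m1 N hN R M hR u hu hM hMz (x+(0,1)) (by linarith [hd1 (0,1) (by tauto)])
  -- decay bound on u (x+(1,0))
  set k : ℕ := (⌊R/4⌋).toNat with hk
  have hfl0 : (0:ℤ) ≤ ⌊R/4⌋ := Int.floor_nonneg.mpr (by positivity)
  have hZ : (k:ℤ) = ⌊R/4⌋ := by rw [hk]; exact Int.toNat_of_nonneg hfl0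
  have hcast : (k:ℝ) = ((⌊R/4⌋ : ℤ):ℝ) := by exact_mod_cast congrArg (Int.cast : ℤ → ℝ) hZ
  have hkR : (k:ℝ) ≤ R/4 := by rw [hcast]; exact Int.floor_le _
  have hkR' : R/4 ≤ (k:ℝ) + 1 := by
    rw [hcast]; linarith [Int.sub_one_lt_floor (R/4)]
  have hdecay : |u (x+(1,0))| ≤ θ^k * M := by
    apply decay N hN R M u hu hM hMz k
    have := hd1 (1,0) (by tauto)
    linarith
  have hgeom := geom_bound θ (le_of_lt hθ0) hθ1 k
  have hsmall : (1-θ) * |u (x+(1,0))| ≤ 4 * M / R := by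
    have h1 : (1-θ) * |u (x+(1,0))| ≤ (1-θ) * (θ^k * M) := by
      apply mul_le_mul_of_nonneg_left hdecay (by linarith)
    have h2 : θ^k * (1-θ) ≤ 1 / ((k:ℝ)+1) := by
      rw [le_div_iff₀ (by positivity : (0:ℝ) < (k:ℝ)+1)]
      nlinarith [hgeom]
    have h3 : 1 / ((k:ℝ)+1) ≤ 4 / R := by
      rw [div_le_div_iff₀ (by positivity) hR0]
      linarith
    have hθk : (0:ℝ) ≤ θ^k * M := by positivity
    calc (1-θ) * |u (x+(1,0))| ≤ (1-θ) * (θ^k * M) := h1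
      _ = (θ^k * (1-θ)) * M := by ring
      _ ≤ (1/((k:ℝ)+1)) * M := by apply mul_le_mul_of_nonneg_right (le_trans h2 (le_refl _)) hM
      _ ≤ (4/R) * M := by apply mul_le_mul_of_nonneg_right h3 hM
      _ = 4 * M / R := by ring
  -- combine
  have habs : |u (x+(1,0)) - u x| ≤ θ/4 * (|u (x+(1,0)) - u (x+(-1,0))| + |u (x+(1,0)) - u (x+(0,1))| + |u (x+(1,0)) - u (x+(0,-1))|) + (1-θ) * |u (x+(1,0))| := by
    rw [hdec]
    calc |θ/4 * ((u (x+(1,0)) - u (x+(-1,0))) + (u (x+(1,0)) - u (x+(0,1))) + (u (x+(1,0)) - u (x+(0,-1)))) + (1-θ) * u (x+(1,0))|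
        ≤ |θ/4 * ((u (x+(1,0)) - u (x+(-1,0))) + (u (x+(1,0)) - u (x+(0,1))) + (u (x+(1,0)) - u (x+(0,-1))))| + |(1-θ) * u (x+(1,0))| := abs_add_le _ _
      _ ≤ θ/4 * (|u (x+(1,0)) - u (x+(-1,0))| + |u (x+(1,0)) - u (x+(0,1))| + |u (x+(1,0)) - u (x+(0,-1))|) + (1-θ) * |u (x+(1,0))| := by
          rw [abs_mul, abs_mul, abs_of_pos (by positivity : (0:ℝ) < θ/4), abs_of_nonneg (by linarith : (0:ℝ) ≤ 1-θ)]
          gcongr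
          calc |u (x+(1,0)) - u (x+(-1,0)) + (u (x+(1,0)) - u (x+(0,1))) + (u (x+(1,0)) - u (x+(0,-1)))|
              ≤ |u (x+(1,0)) - u (x+(-1,0)) + (u (x+(1,0)) - u (x+(0,1)))| + |u (x+(1,0)) - u (x+(0,-1))| := abs_add_le _ _
            _ ≤ |u (x+(1,0)) - u (x+(-1,0))| + |u (x+(1,0)) - u (x+(0,1))| + |u (x+(1,0)) - u (x+(0,-1))| := by
                linarith [abs_add_le (u (x+(1,0)) - u (x+(-1,0))) (u (x+(1,0)) - u (x+(0,1)))]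
  have hMR : (0:ℝ) ≤ M / R := by positivity
  rw [abs_sub_comm]
  calc |u (x+(1,0)) - u x|
      ≤ θ/4 * (|u (x+(1,0)) - u (x+(-1,0))| + |u (x+(1,0)) - u (x+(0,1))| + |u (x+(1,0)) - u (x+(0,-1))|) + (1-θ) * |u (x+(1,0))| := habs
    _ ≤ 1/4 * (3 * (64 * M / R)) + 4 * M / R := by
        have hsum : |u (x+(1,0)) - u (x+(-1,0))| + |u (x+(1,0)) - u (x+(0,1))| + |u (x+(1,0)) - u (x+(0,-1))| ≤ 3 * (64 * M / R) := by linarith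
        have hnn : (0:ℝ) ≤ |u (x+(1,0)) - u (x+(-1,0))| + |u (x+(1,0)) - u (x+(0,1))| + |u (x+(1,0)) - u (x+(0,-1))| := by positivity
        nlinarith [hsmall, hθ0, hθ1]
    _ ≤ 52 * M / R := le_of_eq (by ring)

lemma step8 (R M : ℝ) (u : ℤ × ℤ → ℝ)
    (h20 : ∀ P : ℤ × ℤ, edist2 P 0 ≤ 3/2 * R + 2 → |u P - u (P + (2,0))| ≤ 64 * M / R)
    (h02 : ∀ P : ℤ × ℤ, edist2 P 0 ≤ 3/2 * R + 2 → |u P - u (P + (0,2))| ≤ 64 * M / R)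
    (h11 : ∀ P : ℤ × ℤ, edist2 P 0 ≤ 3/2 * R + 2 → |u P - u (P + (1,1))| ≤ 64 * M / R)
    (h1m1 : ∀ P : ℤ × ℤ, edist2 P 0 ≤ 3/2 * R + 2 → |u P - u (P + (1,-1))| ≤ 64 * M / R) :
    ∀ y d : ℤ × ℤ, (d = (2,0) ∨ d = (-2,0) ∨ d = (0,2) ∨ d = (0,-2) ∨
        d = (1,1) ∨ d = (-1,-1) ∨ d = (1,-1) ∨ d = (-1,1)) →
      edist2 y 0 ≤ 3/2 * R → edist2 (y+d) 0 ≤ 3/2 * R → |u y - u (y+d)| ≤ 64 * M / R := by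
  intro y d hd hy hyd
  rcases hd with h|h|h|h|h|h|h|h <;> subst h
  · exact h20 y (by linarith)
  · rw [abs_sub_comm]
    have hQ : y + (-2,0) + (2,0) = y := by
      refine Prod.ext ?_ ?_ <;> simp [Prod.fst_add, Prod.snd_add]
    calc |u (y + (-2,0)) - u y| = |u (y + (-2,0)) - u (y + (-2,0) + (2,0))| := by rw [hQ]
      _ ≤ 64 * M / R := h20 _ (by linarith)
  · exact h02 y (by linarith)
  · rw [abs_sub_comm]
    have hQ : y + (0,-2) + (0,2) = y := by
      refine Prod.ext ?_ ?_ <;> simp [Prod.fst_add, Prod.snd_add]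
    calc |u (y + (0,-2)) - u y| = |u (y + (0,-2)) - u (y + (0,-2) + (0,2))| := by rw [hQ]
      _ ≤ 64 * M / R := h02 _ (by linarith)
  · exact h11 y (by linarith)
  · rw [abs_sub_comm]
    have hQ : y + (-1,-1) + (1,1) = y := by
      refine Prod.ext ?_ ?_ <;> simp [Prod.fst_add, Prod.snd_add]
    calc |u (y + (-1,-1)) - u y| = |u (y + (-1,-1)) - u (y + (-1,-1) + (1,1))| := by rw [hQ]
      _ ≤ 64 * M / R := h11 _ (by linarith)
  · exact h1m1 y (by linarith)
  · rw [abs_sub_comm]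
    have hQ : y + (-1,1) + (1,-1) = y := by
      refine Prod.ext ?_ ?_ <;> simp [Prod.fst_add, Prod.snd_add]
    calc |u (y + (-1,1)) - u y| = |u (y + (-1,1)) - u (y + (-1,1) + (1,-1))| := by rw [hQ]
      _ ≤ 64 * M / R := h1m1 _ (by linarith)

lemma coord_edist (K : ℤ) (R : ℝ) (hKR : (K:ℝ) ≤ 3/4 * R) (w : ℤ × ℤ)
    (h1 : -K ≤ w.1) (h2 : w.1 ≤ K) (h3 : -K ≤ w.2) (h4 : w.2 ≤ K) :
    edist2 w 0 ≤ 3/2 * R := by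
  have l1 := edist2_le_l1 w 0
  have c1 : |(w.1:ℝ)| ≤ (K:ℝ) := by
    rw [← Int.cast_abs]; exact_mod_cast abs_le.2 ⟨by omega, h2⟩
  have c2 : |(w.2:ℝ)| ≤ (K:ℝ) := by
    rw [← Int.cast_abs]; exact_mod_cast abs_le.2 ⟨by omega, h4⟩
  simp only [Prod.fst_zero, Prod.snd_zero, Int.cast_zero, sub_zero] at l1
  linarith

set_option maxHeartbeats 1000000 in
lemma chain (R M : ℝ) (hR : 64 ≤ R) (u : ℤ × ℤ → ℝ) (hM : 0 ≤ M)
    (K : ℤ) (hKR : (K:ℝ) ≤ 3/4 * R)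
    (h8 : ∀ y d : ℤ × ℤ, (d = (2,0) ∨ d = (-2,0) ∨ d = (0,2) ∨ d = (0,-2) ∨
        d = (1,1) ∨ d = (-1,-1) ∨ d = (1,-1) ∨ d = (-1,1)) →
      edist2 y 0 ≤ 3/2 * R → edist2 (y+d) 0 ≤ 3/2 * R → |u y - u (y+d)| ≤ 64 * M / R) :
    ∀ n : ℕ, ∀ y z : ℤ × ℤ,
      -K ≤ y.1 → y.1 ≤ K → -K ≤ y.2 → y.2 ≤ K →
      -K ≤ z.1 → z.1 ≤ K → -K ≤ z.2 → z.2 ≤ K →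
      (z.1 - y.1 + (z.2 - y.2)) % 2 = 0 →
      (z.1 - y.1).natAbs + (z.2 - y.2).natAbs ≤ n →
      |u y - u z| ≤ n * (32 * M / R) := by
  have hR0 : (0:ℝ) < R := by linarith
  intro n
  induction n using Nat.strong_induction_on with
  | _ n ih =>
    intro y z hy1 hy2 hy3 hy4 hz1 hz2 hz3 hz4 hpar hlen
    by_cases hyz : y = z
    · subst hyz
      simp only [sub_self, abs_zero]
      positivity
    · -- pick a step d towards z
      have hne : z.1 ≠ y.1 ∨ z.2 ≠ y.2 := by
        by_contra hc; push_neg at hc; exact hyz (Prod.ext hc.1.symm hc.2.symm)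
      obtain ⟨d, hdmem, hd1, hd2, hdec⟩ :
          ∃ d : ℤ × ℤ, (d = (2,0) ∨ d = (-2,0) ∨ d = (0,2) ∨ d = (0,-2) ∨
            d = (1,1) ∨ d = (-1,-1) ∨ d = (1,-1) ∨ d = (-1,1)) ∧
            (-K ≤ y.1 + d.1 ∧ y.1 + d.1 ≤ K) ∧ (-K ≤ y.2 + d.2 ∧ y.2 + d.2 ≤ K) ∧
            ((z.1 - (y.1 + d.1)).natAbs + (z.2 - (y.2 + d.2)).natAbs + 2
              = (z.1 - y.1).natAbs + (z.2 - y.2).natAbs ∧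
             (z.1 - (y.1+d.1) + (z.2 - (y.2+d.2))) % 2 = 0) := by
        by_cases hp : z.1 ≠ y.1 ∧ z.2 ≠ y.2
        · obtain ⟨hp1, hp2⟩ := hp
          rcases lt_or_gt_of_ne hp1 with c1 | c1 <;> rcases lt_or_gt_of_ne hp2 with c2 | c2
          · exact ⟨(-1,-1), by tauto, by constructor <;> omega, by constructor <;> omega,
              by constructor <;> omega⟩
          · exact ⟨(-1,1), by tauto, by constructor <;> omega, by constructor <;> omega,
              by constructor <;> omega⟩
          · exact ⟨(1,-1), by tauto, by constructor <;> omega, by constructor <;> omega,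
              by constructor <;> omega⟩
          · exact ⟨(1,1), by tauto, by constructor <;> omega, by constructor <;> omega,
              by constructor <;> omega⟩
        · push_neg at hp
          rcases hne with h | h
          · have h2 : z.2 = y.2 := hp h
            rcases lt_or_gt_of_ne h with c | c
            · exact ⟨(-2,0), by tauto, by constructor <;> omega, by constructor <;> omega,
                by constructor <;> omega⟩
            · exact ⟨(2,0), by tauto, by constructor <;> omega, by constructor <;> omega,
                by constructor <;> omega⟩
          · have h1 : z.1 = y.1 := by
              by_contra hc; exact h (hp hc)
            rcases lt_or_gt_of_ne h with c | c
            · exact ⟨(0,-2), by tauto, by constructor <;> omega, by constructor <;> omega,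
                by constructor <;> omega⟩
            · exact ⟨(0,2), by tauto, by constructor <;> omega, by constructor <;> omega,
                by constructor <;> omega⟩
      set y' : ℤ × ℤ := y + d with hy'
      have hy'1 : y'.1 = y.1 + d.1 := rfl
      have hy'2 : y'.2 = y.2 + d.2 := rfl
      -- step bound
      have hstep : |u y - u y'| ≤ 64 * M / R := by
        apply h8 y d hdmem
        · exact coord_edist K R hKR y hy1 hy2 hy3 hy4
        · exact coord_edist K R hKR y' (by omega) (by omega) (by omega) (by omega)
      -- n ≥ 2
      have hn2 : 2 ≤ n := by omega
      -- induction
      have hrec := ih (n-2) (by omega) y' z (by omega) (by omega) (by omega) (by omega)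
        hz1 hz2 hz3 hz4 (by omega) (by omega)
      have hcast : ((n-2 : ℕ):ℝ) = (n:ℝ) - 2 := by
        push_cast [Nat.cast_sub hn2]; ring
      rw [hcast] at hrec
      calc |u y - u z| ≤ |u y - u y'| + |u y' - u z| := abs_sub_le _ _ _
        _ ≤ 64 * M / R + ((n:ℝ) - 2) * (32 * M / R) := by linarith
        _ = n * (32 * M / R) := by ring


set_option maxHeartbeats 1000000 in
theorem harmonic_gradient_estimate :
    ∃ C : ℝ, 0 < C ∧
      ∀ N : ℕ, 1 ≤ N → ∀ R : ℝ, 1 ≤ R → ∀ u : ℤ × ℤ → ℝ,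
        (∀ x : ℤ × ℤ, edist2 x 0 ≤ 2 * R - 1 →
          (1 + ((N : ℝ) ^ 2)⁻¹) * u x =
            (1 / 4) * (u (x + (1, 0)) + u (x + (-1, 0)) + u (x + (0, 1)) + u (x + (0, -1)))) →
        ∀ x₁ x₂ : ℤ × ℤ, edist2 x₁ 0 ≤ R / 2 → edist2 x₂ 0 ≤ R / 2 →
          |u x₁ - u x₂| ≤
            C / R * edist2 x₁ x₂ * ⨆ (z : ℤ × ℤ) (_ : edist2 z 0 ≤ 2 * R), |u z| := by
  refine ⟨256, by norm_num, ?_⟩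
  intro N hN R hR1 u hu x₁ x₂ hx₁ hx₂
  have hR0 : (0:ℝ) < R := by linarith
  set M : ℝ := ⨆ (z : ℤ × ℤ) (_ : edist2 z 0 ≤ 2 * R), |u z| with hMdef
  have hTfin : {z : ℤ × ℤ | edist2 z 0 ≤ 2*R}.Finite := by
    apply Set.Finite.subset (Set.finite_Icc ((-⌈2*R⌉, -⌈2*R⌉) : ℤ × ℤ) (⌈2*R⌉, ⌈2*R⌉))
    intro z hz
    simp only [Set.mem_setOf_eq] at hz
    have c1 : |(z.1:ℝ)| ≤ 2*R := by
      have := abs_coord1 z 0; simp only [Prod.fst_zero, Int.cast_zero, sub_zero] at this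
      linarith
    have c2 : |(z.2:ℝ)| ≤ 2*R := by
      have := abs_coord2 z 0; simp only [Prod.snd_zero, Int.cast_zero, sub_zero] at this
      linarith
    have d1 : |z.1| ≤ ⌈2*R⌉ := by
      have h' : |(z.1:ℝ)| ≤ (⌈2*R⌉ : ℝ) := le_trans c1 (Int.le_ceil _)
      exact_mod_cast h'
    have d2 : |z.2| ≤ ⌈2*R⌉ := by
      have h' : |(z.2:ℝ)| ≤ (⌈2*R⌉ : ℝ) := le_trans c2 (Int.le_ceil _)
      exact_mod_cast h'
    have e1 := abs_le.1 d1
    have e2 := abs_le.1 d2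
    exact Set.mem_Icc.2 ⟨⟨e1.1, e2.1⟩, ⟨e1.2, e2.2⟩⟩
  have hbdd : BddAbove (Set.range fun z : ℤ × ℤ => ⨆ (_ : edist2 z 0 ≤ 2*R), |u z|) := by
    apply BddAbove.mono ?_ (Set.Finite.bddAbove
      (Set.Finite.insert 0 (hTfin.image (fun z => |u z|))))
    rintro val ⟨z, rfl⟩
    dsimp only
    by_cases h : edist2 z 0 ≤ 2*R
    · rw [ciSup_pos (f := fun _ : edist2 z 0 ≤ 2*R => |u z|) h]
      exact Set.mem_insert_of_mem _ ⟨z, h, rfl⟩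
    · rw [ciSup_neg (f := fun _ : edist2 z 0 ≤ 2*R => |u z|) h, Real.sSup_empty]
      exact Set.mem_insert _ _
  have hMz : ∀ z : ℤ × ℤ, edist2 z 0 ≤ 2*R → |u z| ≤ M := by
    intro z hz
    calc |u z| = ⨆ (_ : edist2 z 0 ≤ 2*R), |u z| :=
          (ciSup_pos (f := fun _ : edist2 z 0 ≤ 2*R => |u z|) hz).symm
      _ ≤ M := le_ciSup hbdd z
  have hM0 : 0 ≤ M := by
    have h0 : edist2 0 0 ≤ 2*R := by
      rw [edist2_zero_self]; linarith
    linarith [abs_nonneg (u 0), hMz 0 h0]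
  set D : ℝ := edist2 x₁ x₂ with hD
  have hD0 : 0 ≤ D := edist2_nonneg _ _
  by_cases hxx : x₁ = x₂
  · subst hxx
    simp only [sub_self, abs_zero]
    exact mul_nonneg (mul_nonneg (by positivity) hD0) hM0
  have hD1 : 1 ≤ D := one_le_edist2 _ _ hxx
  by_cases hRbig : 64 ≤ R
  case neg =>
    have h1 : |u x₁| ≤ M := hMz x₁ (by linarith)
    have h2 : |u x₂| ≤ M := hMz x₂ (by linarith)
    have h3 : |u x₁ - u x₂| ≤ 2*M := by
      calc |u x₁ - u x₂| ≤ |u x₁| + |u x₂| := abs_sub _ _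
        _ ≤ 2*M := by linarith
    have h4 : (4:ℝ) ≤ 256 / R := by
      rw [le_div_iff₀ hR0]; nlinarith
    have h5 : 2*M ≤ 256 / R * D * M := by
      have e1 : (4:ℝ) * 1 * M ≤ (256/R) * D * M := by
        apply mul_le_mul_of_nonneg_right _ hM0
        apply mul_le_mul h4 hD1 (by norm_num) (by positivity)
      nlinarith
    linarith
  case pos =>
    set K : ℤ := ⌊R/2⌋ + 2 with hK
    have hKup : (K:ℝ) ≤ R/2 + 2 := by
      rw [hK]; push_cast; linarith [Int.floor_le (R/2)]
    have hKlo : R/2 + 1 ≤ (K:ℝ) := by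
      rw [hK]; push_cast; linarith [Int.sub_one_lt_floor (R/2)]
    have hKR : (K:ℝ) ≤ 3/4 * R := by linarith
    have hcoord : ∀ w : ℤ × ℤ, edist2 w 0 ≤ R/2 →
        (-(K-1) ≤ w.1 ∧ w.1 ≤ K-1 ∧ -(K-1) ≤ w.2 ∧ w.2 ≤ K-1) := by
      intro w hw
      have c1 : |(w.1:ℝ)| ≤ (K:ℝ) - 1 := by
        have := abs_coord1 w 0; simp only [Prod.fst_zero, Int.cast_zero, sub_zero] at this
        linarith
      have c2 : |(w.2:ℝ)| ≤ (K:ℝ) - 1 := by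
        have := abs_coord2 w 0; simp only [Prod.snd_zero, Int.cast_zero, sub_zero] at this
        linarith
      have d1 : |w.1| ≤ K - 1 := by
        have h' : |(w.1:ℝ)| ≤ ((K - 1 : ℤ) : ℝ) := by push_cast; linarith
        exact_mod_cast h'
      have d2 : |w.2| ≤ K - 1 := by
        have h' : |(w.2:ℝ)| ≤ ((K - 1 : ℤ) : ℝ) := by push_cast; linarith
        exact_mod_cast h'
      have e1 := abs_le.1 d1
      have e2 := abs_le.1 d2
      exact ⟨e1.1, e1.2, e2.1, e2.2⟩
    obtain ⟨a1, a2, a3, a4⟩ := hcoord x₁ hx₁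
    obtain ⟨b1, b2, b3, b4⟩ := hcoord x₂ hx₂
    have h20 := step20 N hN R M hRbig u hu hM0 hMz
    have h02 := step02 N hN R M hRbig u hu hM0 hMz
    have h11 := step11 N hN R M hRbig u hu hM0 hMz
    have h1m1 := step1m1 N hN R M hRbig u hu hM0 hMz
    have h8 := step8 R M u h20 h02 h11 h1m1
    have hchain := chain R M hRbig u hM0 K hKR h8
    have hl1 : |(x₂.1:ℝ) - x₁.1| + |(x₂.2:ℝ) - x₁.2| ≤ 3/2 * D := by
      have := l1_le_edist2 x₂ x₁
      rw [edist2_symm x₂ x₁] at this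
      exact this
    have hMR : (0:ℝ) ≤ 32 * M / R := by positivity
    set p : ℤ := x₂.1 - x₁.1 with hp
    set q : ℤ := x₂.2 - x₁.2 with hq
    have hcastp : ((p.natAbs : ℕ) : ℝ) = |(x₂.1:ℝ) - x₁.1| := by
      rw [Nat.cast_natAbs, hp]; push_cast; ring_nf
    have hcastq : ((q.natAbs : ℕ) : ℝ) = |(x₂.2:ℝ) - x₁.2| := by
      rw [Nat.cast_natAbs, hq]; push_cast; ring_nf
    by_cases hpar : (p + q) % 2 = 0
    · set n : ℕ := p.natAbs + q.natAbs with hn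
      have hb := hchain n x₁ x₂ (by omega) (by omega) (by omega) (by omega)
        (by omega) (by omega) (by omega) (by omega) (by omega) (by omega)
      have hcast : ((n:ℕ):ℝ) = |(x₂.1:ℝ) - x₁.1| + |(x₂.2:ℝ) - x₁.2| := by
        rw [hn]; push_cast [hcastp, hcastq]; ring
      rw [hcast] at hb
      calc |u x₁ - u x₂| ≤ (|(x₂.1:ℝ) - x₁.1| + |(x₂.2:ℝ) - x₁.2|) * (32 * M / R) := hb
        _ ≤ (3/2 * D) * (32 * M / R) := mul_le_mul_of_nonneg_right hl1 hMR
        _ = (48 * D * M) / R := by ring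
        _ ≤ (256 * D * M) / R := by
            gcongr
            nlinarith [mul_nonneg hD0 hM0]
        _ = 256 / R * D * M := by ring
    · set y' : ℤ × ℤ := x₁ + (1,0) with hy'
      have hodd := stepodd N hN R M hRbig u hu hM0 hMz x₁ (by linarith)
      have hy'1 : y'.1 = x₁.1 + 1 := by simp [hy']
      have hy'2 : y'.2 = x₁.2 := by simp [hy']
      set n : ℕ := (p-1).natAbs + q.natAbs with hn
      have hb := hchain n y' x₂ (by omega) (by omega) (by omega) (by omega)
        (by omega) (by omega) (by omega) (by omega) (by omega) (by omega)
      have hcastp' : (((p-1).natAbs : ℕ) : ℝ) ≤ ((p.natAbs : ℕ) : ℝ) + 1 := by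
        have : (p-1).natAbs ≤ p.natAbs + 1 := by omega
        exact_mod_cast this
      have hcast : ((n:ℕ):ℝ) ≤ |(x₂.1:ℝ) - x₁.1| + |(x₂.2:ℝ) - x₁.2| + 1 := by
        rw [hn]
        push_cast
        push_cast at hcastp'
        rw [hcastp, hcastq] at *
        linarith
      have hnb : ((n:ℕ):ℝ) ≤ 3/2 * D + 1 := by linarith
      have hb2 : |u y' - u x₂| ≤ (3/2 * D + 1) * (32 * M / R) := by
        calc |u y' - u x₂| ≤ (n:ℝ) * (32 * M / R) := hb
          _ ≤ (3/2 * D + 1) * (32 * M / R) := mul_le_mul_of_nonneg_right hnb hMR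
      calc |u x₁ - u x₂| ≤ |u x₁ - u y'| + |u y' - u x₂| := abs_sub_le _ _ _
        _ ≤ 52 * M / R + (3/2 * D + 1) * (32 * M / R) := by linarith
        _ = (52 * M + (3/2 * D + 1) * (32 * M)) / R := by ring
        _ ≤ (256 * D * M) / R := by
            gcongr
            nlinarith [hD1, hM0, mul_nonneg hM0 hD0]
        _ = 256 / R * D * M := by ring
end
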